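/- arXiv:2404.16971 — 3 statements merged into one kernel-verified Lean document; each statement's English description precedes it below -/
import Mathlib

section
/- Let T be a locally satisfiable negative local theory with the local joint property and κ > |L| a cardinal. Then every κ-ultrahomogeneous local model of T is κ-universal for the class of local models of T. In particular, T has at most one retractor up to isomorphism, and any retractor of T is absolutely universal for the class of local models of T. -/
noncomputable section

structure LocalLanguage : Type 1 where
  Sorts : Type
  Rel : (n : ℕ) → (Fin n → Sorts) → Type
  Const : Sorts → Type
  Loc : Sorts → Type
  locToRel : {s : Sorts} → Loc s → Rel 2 ![s, s]
  dd0 : (s : Sorts) → Loc s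
  locMul : {s : Sorts} → Loc s → Loc s → Loc s
  locLe : {s : Sorts} → Loc s → Loc s → Prop
  locMul_assoc : ∀ {s} (d₁ d₂ d₃ : Loc s), locMul (locMul d₁ d₂) d₃ = locMul d₁ (locMul d₂ d₃)
  dd0_locMul : ∀ {s} (d : Loc s), locMul (dd0 s) d = d
  locMul_dd0 : ∀ {s} (d : Loc s), locMul d (dd0 s) = d
  locLe_refl : ∀ {s} (d : Loc s), locLe d d
  locLe_trans : ∀ {s} (d₁ d₂ d₃ : Loc s), locLe d₁ d₂ → locLe d₂ d₃ → locLe d₁ d₃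
  locLe_antisymm : ∀ {s} (d₁ d₂ : Loc s), locLe d₁ d₂ → locLe d₂ d₁ → d₁ = d₂
  dd0_locLe : ∀ {s} (d : Loc s), locLe (dd0 s) d
  locMul_mono : ∀ {s} (d₁ d₂ e₁ e₂ : Loc s), locLe d₁ e₁ → locLe d₂ e₂ →
    locLe (locMul d₁ d₂) (locMul e₁ e₂)
  bound : {s : Sorts} → Const s → Const s → Loc s

structure LStructure (L : LocalLanguage) : Type 1 where
  Dom : L.Sorts → Type
  relMap : {n : ℕ} → {ρ : Fin n → L.Sorts} → L.Rel n ρ → ((i : Fin n) → Dom (ρ i)) → Prop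
  constMap : {s : L.Sorts} → L.Const s → Dom s

def dpair {C : Fin 2 → Sort*} (a : C 0) (b : C 1) : (i : Fin 2) → C i
  | ⟨0, _⟩ => a
  | ⟨1, _⟩ => b

def LStructure.locRel {L : LocalLanguage} (M : LStructure L) {s : L.Sorts}
    (d : L.Loc s) (a b : M.Dom s) : Prop :=
  M.relMap (L.locToRel d) (dpair a b)

structure IsLocal {L : LocalLanguage} (M : LStructure L) : Prop where
  symm : ∀ {s : L.Sorts} (d : L.Loc s) (a b : M.Dom s), M.locRel d a b → M.locRel d b a
  mono : ∀ {s : L.Sorts} (d₁ d₂ : L.Loc s), L.locLe d₁ d₂ →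
    ∀ (a b : M.Dom s), M.locRel d₁ a b → M.locRel d₂ a b
  comp : ∀ {s : L.Sorts} (d₁ d₂ : L.Loc s) (a b c : M.Dom s),
    M.locRel d₁ a b → M.locRel d₂ b c → M.locRel (L.locMul d₁ d₂) a c
  boundAx : ∀ {s : L.Sorts} (c₁ c₂ : L.Const s),
    M.locRel (L.bound c₁ c₂) (M.constMap c₁) (M.constMap c₂)
  total : ∀ {s : L.Sorts} (a b : M.Dom s), ∃ d : L.Loc s, M.locRel d a b
  dd0_eq : ∀ {s : L.Sorts} (a b : M.Dom s), M.locRel (L.dd0 s) a b ↔ a = b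

/-! ## Syntax -/

/-- Terms: variables or constants (the language is relational). -/
inductive LTerm (L : LocalLanguage) (α : Type) (σ : α → L.Sorts) : L.Sorts → Type
  | var (a : α) : LTerm L α σ (σ a)
  | const {s : L.Sorts} (c : L.Const s) : LTerm L α σ s

/-- Sort assignment for a context extended by one variable of sort `s`. -/
abbrev osort {L : LocalLanguage} {α : Type} (s : L.Sorts) (σ : α → L.Sorts) :
    Option α → L.Sorts :=
  fun o => Option.elim o s σ

/-- Positive formulas: atomic, conjunction, disjunction, existential quantification. -/
inductive PosForm (L : LocalLanguage) : (α : Type) → (α → L.Sorts) → Type 1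
  | rel {α : Type} {σ : α → L.Sorts} {n : ℕ} {ρ : Fin n → L.Sorts}
      (R : L.Rel n ρ) (ts : (i : Fin n) → LTerm L α σ (ρ i)) : PosForm L α σ
  | and {α : Type} {σ : α → L.Sorts} (φ ψ : PosForm L α σ) : PosForm L α σ
  | or {α : Type} {σ : α → L.Sorts} (φ ψ : PosForm L α σ) : PosForm L α σ
  | ex {α : Type} {σ : α → L.Sorts} (s : L.Sorts)
      (φ : PosForm L (Option α) (osort s σ)) : PosForm L α σ

/-- Local positive formulas: atomic, conjunction, disjunction, local existential
quantification `∃ x ∈ d(t) φ`. -/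
inductive LPosForm (L : LocalLanguage) : (α : Type) → (α → L.Sorts) → Type 1
  | rel {α : Type} {σ : α → L.Sorts} {n : ℕ} {ρ : Fin n → L.Sorts}
      (R : L.Rel n ρ) (ts : (i : Fin n) → LTerm L α σ (ρ i)) : LPosForm L α σ
  | and {α : Type} {σ : α → L.Sorts} (φ ψ : LPosForm L α σ) : LPosForm L α σ
  | or {α : Type} {σ : α → L.Sorts} (φ ψ : LPosForm L α σ) : LPosForm L α σ
  | lex {α : Type} {σ : α → L.Sorts} (s : L.Sorts) (d : L.Loc s) (t : LTerm L α σ s)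
      (φ : LPosForm L (Option α) (osort s σ)) : LPosForm L α σ

/-- Local formulas: atomic, negation, conjunction, local existential quantification. -/
inductive LForm (L : LocalLanguage) : (α : Type) → (α → L.Sorts) → Type 1
  | rel {α : Type} {σ : α → L.Sorts} {n : ℕ} {ρ : Fin n → L.Sorts}
      (R : L.Rel n ρ) (ts : (i : Fin n) → LTerm L α σ (ρ i)) : LForm L α σ
  | not {α : Type} {σ : α → L.Sorts} (φ : LForm L α σ) : LForm L α σ
  | and {α : Type} {σ : α → L.Sorts} (φ ψ : LForm L α σ) : LForm L α σ
  | lex {α : Type} {σ : α → L.Sorts} (s : L.Sorts) (d : L.Loc s) (t : LTerm L α σ s)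
      (φ : LForm L (Option α) (osort s σ)) : LForm L α σ

/-! ## Semantics -/

def LTerm.realize {L : LocalLanguage} (M : LStructure L) {α : Type} {σ : α → L.Sorts}
    (v : (a : α) → M.Dom (σ a)) : {s : L.Sorts} → LTerm L α σ s → M.Dom s
  | _, .var a => v a
  | _, .const c => M.constMap c

/-- Extension of a valuation by a value for the new variable. -/
def vcons {L : LocalLanguage} {M : LStructure L} {α : Type} {σ : α → L.Sorts} {s : L.Sorts}
    (x : M.Dom s) (v : (a : α) → M.Dom (σ a)) : (o : Option α) → M.Dom (osort s σ o)
  | none => x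
  | some a => v a

def PosForm.Realize {L : LocalLanguage} (M : LStructure L) :
    {α : Type} → {σ : α → L.Sorts} → PosForm L α σ → ((a : α) → M.Dom (σ a)) → Prop
  | _, _, .rel R ts, v => M.relMap R (fun i => (ts i).realize M v)
  | _, _, .and φ ψ, v => φ.Realize M v ∧ ψ.Realize M v
  | _, _, .or φ ψ, v => φ.Realize M v ∨ ψ.Realize M v
  | _, _, .ex s φ, v => ∃ x : M.Dom s, φ.Realize M (vcons x v)

def LPosForm.Realize {L : LocalLanguage} (M : LStructure L) :
    {α : Type} → {σ : α → L.Sorts} → LPosForm L α σ → ((a : α) → M.Dom (σ a)) → Prop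
  | _, _, .rel R ts, v => M.relMap R (fun i => (ts i).realize M v)
  | _, _, .and φ ψ, v => φ.Realize M v ∧ ψ.Realize M v
  | _, _, .or φ ψ, v => φ.Realize M v ∨ ψ.Realize M v
  | _, _, .lex s d t φ, v =>
      ∃ x : M.Dom s, M.locRel d x (t.realize M v) ∧ φ.Realize M (vcons x v)

def LForm.Realize {L : LocalLanguage} (M : LStructure L) :
    {α : Type} → {σ : α → L.Sorts} → LForm L α σ → ((a : α) → M.Dom (σ a)) → Prop
  | _, _, .rel R ts, v => M.relMap R (fun i => (ts i).realize M v)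
  | _, _, .not φ, v => ¬ φ.Realize M v
  | _, _, .and φ ψ, v => φ.Realize M v ∧ ψ.Realize M v
  | _, _, .lex s d t φ, v =>
      ∃ x : M.Dom s, M.locRel d x (t.realize M v) ∧ φ.Realize M (vcons x v)

/-- Quantifier-free positive formulas. -/
inductive PosForm.IsQF {L : LocalLanguage} : {α : Type} → {σ : α → L.Sorts} → PosForm L α σ → Prop
  | rel {α : Type} {σ : α → L.Sorts} {n : ℕ} {ρ : Fin n → L.Sorts}
      (R : L.Rel n ρ) (ts : (i : Fin n) → LTerm L α σ (ρ i)) : PosForm.IsQF (.rel R ts)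
  | and {α : Type} {σ : α → L.Sorts} {φ ψ : PosForm L α σ} :
      PosForm.IsQF φ → PosForm.IsQF ψ → PosForm.IsQF (.and φ ψ)
  | or {α : Type} {σ : α → L.Sorts} {φ ψ : PosForm L α σ} :
      PosForm.IsQF φ → PosForm.IsQF ψ → PosForm.IsQF (.or φ ψ)


/-! ## Sentences, theories, models -/

/-- Sort assignment for the empty context. -/
abbrev emptySorts (L : LocalLanguage) : Empty → L.Sorts := fun e => e.elim

/-- Positive sentences. -/
abbrev PosSentence (L : LocalLanguage) := PosForm L Empty (emptySorts L)

/-- A positive sentence holds in a structure. -/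
def PosSentence.RealizedIn {L : LocalLanguage} (φ : PosSentence L) (M : LStructure L) : Prop :=
  φ.Realize M (fun e => e.elim)

/-- We represent a negative theory by the set of positive sentences whose negations
belong to it.  `M` is a local model of `T` if `M` is local and satisfies the negation of
every positive sentence in `T`. -/
def LocalModel {L : LocalLanguage} (M : LStructure L) (T : Set (PosSentence L)) : Prop :=
  IsLocal M ∧ ∀ φ ∈ T, ¬ φ.RealizedIn M

/-- `T` (a set of positive sentences standing for the negative theory `{¬φ : φ ∈ T}`)
is a negative local theory if it is closed under local implication: any negative sentence
true in every local model of `T` is already in `T`. -/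
def IsNegLocalTheory {L : LocalLanguage} (T : Set (PosSentence L)) : Prop :=
  ∀ φ : PosSentence L, (∀ M : LStructure L, LocalModel M T → ¬ φ.RealizedIn M) → φ ∈ T

/-- `T` is locally satisfiable: it has a local model. -/
def LocSat {L : LocalLanguage} (T : Set (PosSentence L)) : Prop :=
  ∃ M : LStructure L, LocalModel M T

/-- The negative theory of a structure (as the set of positive sentences failing in it). -/
def ThNeg {L : LocalLanguage} (M : LStructure L) : Set (PosSentence L) :=
  {φ | ¬ φ.RealizedIn M}

/-! ## Homomorphisms -/

structure LHom {L : LocalLanguage} (M N : LStructure L) where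
  toFun : (s : L.Sorts) → M.Dom s → N.Dom s
  map_rel : ∀ {n : ℕ} {ρ : Fin n → L.Sorts} (R : L.Rel n ρ) (x : (i : Fin n) → M.Dom (ρ i)),
    M.relMap R x → N.relMap R (fun i => toFun (ρ i) (x i))
  map_const : ∀ {s : L.Sorts} (c : L.Const s), toFun s (M.constMap c) = N.constMap c

def LHom.comp {L : LocalLanguage} {M N P : LStructure L} (g : LHom N P) (f : LHom M N) :
    LHom M P where
  toFun s := g.toFun s ∘ f.toFun s
  map_rel R x h := g.map_rel R _ (f.map_rel R x h)
  map_const c := by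
    simp only [Function.comp_apply, f.map_const, g.map_const]

def LHom.id {L : LocalLanguage} (M : LStructure L) : LHom M M where
  toFun _ := fun x => x
  map_rel _ _ h := h
  map_const _ := rfl

/-- A homomorphism is a positive embedding if it reflects all positive formulas. -/
def LHom.IsPosEmbedding {L : LocalLanguage} {M N : LStructure L} (h : LHom M N) : Prop :=
  ∀ (α : Type) (σ : α → L.Sorts) (φ : PosForm L α σ) (v : (a : α) → M.Dom (σ a)),
    φ.Realize N (fun a => h.toFun (σ a) (v a)) → φ.Realize M v

/-- A local positively closed model of `T`. -/
def IsPC {L : LocalLanguage} (M : LStructure L) (T : Set (PosSentence L)) : Prop :=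
  LocalModel M T ∧
    ∀ (N : LStructure L) (h : LHom M N), LocalModel N T → h.IsPosEmbedding

/-- An endomorphism is an automorphism if it has a two-sided inverse homomorphism. -/
def LHom.IsAuto {L : LocalLanguage} {M : LStructure L} (f : LHom M M) : Prop :=
  ∃ g : LHom M M, g.comp f = LHom.id M ∧ f.comp g = LHom.id M

/-- Isomorphism of structures. -/
def Isomorphic {L : LocalLanguage} (M N : LStructure L) : Prop :=
  ∃ (f : LHom M N) (g : LHom N M), g.comp f = LHom.id M ∧ f.comp g = LHom.id N

/-! ## Types -/

/-- The local positive type of a tuple. -/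
def ltp {L : LocalLanguage} (M : LStructure L) {α : Type} {σ : α → L.Sorts}
    (v : (a : α) → M.Dom (σ a)) : Set (LPosForm L α σ) :=
  {φ | φ.Realize M v}

/-- The positive type of a tuple. -/
def ptp {L : LocalLanguage} (M : LStructure L) {α : Type} {σ : α → L.Sorts}
    (v : (a : α) → M.Dom (σ a)) : Set (PosForm L α σ) :=
  {φ | φ.Realize M v}

/-- A partial local positive type of `T` on `(α, σ)`: a set of local positive formulas
realized by some tuple in some local model of `T`. -/
def IsPartialLType {L : LocalLanguage} (T : Set (PosSentence L)) {α : Type}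
    {σ : α → L.Sorts} (Γ : Set (LPosForm L α σ)) : Prop :=
  ∃ (M : LStructure L) (v : (a : α) → M.Dom (σ a)),
    LocalModel M T ∧ ∀ φ ∈ Γ, LPosForm.Realize M φ v

/-- A local positive type: a maximal partial local positive type. -/
def IsLType {L : LocalLanguage} (T : Set (PosSentence L)) {α : Type}
    {σ : α → L.Sorts} (Γ : Set (LPosForm L α σ)) : Prop :=
  IsPartialLType T Γ ∧ ∀ Γ' : Set (LPosForm L α σ), IsPartialLType T Γ' → Γ ⊆ Γ' → Γ' = Γ

/-- A variable `(α, σ)` is pointed if every sort not occurring among its sorts carries a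
constant symbol. -/
def VPointed {L : LocalLanguage} {α : Type} (σ : α → L.Sorts) : Prop :=
  ∀ s : L.Sorts, s ∉ Set.range σ → Nonempty (L.Const s)


/-! ## Bounds and bounded satisfiability -/

/-- Pair of terms as arguments for a binary relation symbol. -/
def tpair {L : LocalLanguage} {α : Type} {σ : α → L.Sorts} {s t : L.Sorts}
    (t₁ : LTerm L α σ s) (t₂ : LTerm L α σ t) : (i : Fin 2) → LTerm L α σ (![s, t] i) :=
  dpair t₁ t₂

/-- A bound of the variable `(α, σ)`: a choice, for every single variable whose sort
carries a constant symbol, of a locality relation and a constant, and for every pair of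
single variables of the same sort, of a locality relation. -/
structure VBound (L : LocalLanguage) (α : Type) (σ : α → L.Sorts) where
  dConst : (a : α) → Nonempty (L.Const (σ a)) → L.Loc (σ a)
  cConst : (a : α) → Nonempty (L.Const (σ a)) → L.Const (σ a)
  dPair : (a b : α) → σ a = σ b → L.Loc (σ a)

/-- The set of (atomic, quantifier-free) local positive formulas making up a bound:
`d_a(x_a, c_a)` and `d_{a,b}(x_a, x_b)`. -/
def VBound.toSet {L : LocalLanguage} {α : Type} {σ : α → L.Sorts} (B : VBound L α σ) :
    Set (LPosForm L α σ) :=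
  {φ | (∃ (a : α) (h : Nonempty (L.Const (σ a))),
          φ = LPosForm.rel (L.locToRel (B.dConst a h))
                (tpair (LTerm.var a) (LTerm.const (B.cConst a h)))) ∨
       (∃ (a b : α) (e : σ a = σ b),
          φ = LPosForm.rel (L.locToRel (B.dPair a b e))
                (tpair (LTerm.var a) (e.symm ▸ LTerm.var b)))}

/-- A bound holds of a tuple if all its formulas do. -/
def VBound.Holds {L : LocalLanguage} {α : Type} {σ : α → L.Sorts} (B : VBound L α σ)
    (M : LStructure L) (v : (a : α) → M.Dom (σ a)) : Prop :=
  ∀ ψ ∈ B.toSet, LPosForm.Realize M ψ v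

/-- Finite local satisfiability of a set of local positive formulas in `T`. -/
def FinLocSat {L : LocalLanguage} (T : Set (PosSentence L)) {α : Type} {σ : α → L.Sorts}
    (Δ : Set (LPosForm L α σ)) : Prop :=
  ∀ Δ₀ ⊆ Δ, Δ₀.Finite →
    ∃ (M : LStructure L) (v : (a : α) → M.Dom (σ a)),
      LocalModel M T ∧ ∀ φ ∈ Δ₀, LPosForm.Realize M φ v

/-- Bounded satisfiability: for some bound `B`, `Γ ∪ B` is finitely locally satisfiable. -/
def BoundedlySat {L : LocalLanguage} (T : Set (PosSentence L)) {α : Type}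
    {σ : α → L.Sorts} (Γ : Set (LPosForm L α σ)) : Prop :=
  ∃ B : VBound L α σ, FinLocSat T (Γ ∪ B.toSet)

/-! ## Π₁-local formulas -/

/-- Dependent `Sum.elim` of valuations. -/
def sval {L : LocalLanguage} {M : LStructure L} {α β : Type} {σ : α → L.Sorts}
    {τ : β → L.Sorts} (v : (a : α) → M.Dom (σ a)) (w : (b : β) → M.Dom (τ b)) :
    (x : α ⊕ β) → M.Dom (Sum.elim σ τ x)
  | .inl a => v a
  | .inr b => w b

/-- A Π₁-local formula: a universally quantified local formula. -/
structure Pi1LForm (L : LocalLanguage) (α : Type) (σ : α → L.Sorts) : Type 1 where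
  n : ℕ
  τ : Fin n → L.Sorts
  matrix : LForm L (α ⊕ Fin n) (Sum.elim σ τ)

def Pi1LForm.Realize {L : LocalLanguage} {α : Type} {σ : α → L.Sorts}
    (φ : Pi1LForm L α σ) (M : LStructure L) (v : (a : α) → M.Dom (σ a)) : Prop :=
  ∀ w : (i : Fin φ.n) → M.Dom (φ.τ i), φ.matrix.Realize M (sval v w)

/-- Bounded satisfiability of a set of Π₁-local formulas: for some bound `B`, every
finite subset of `Γ` together with every finite part of `B` is realized in a local
model of `T`. -/
def Pi1BoundedlySat {L : LocalLanguage} (T : Set (PosSentence L)) {α : Type}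
    {σ : α → L.Sorts} (Γ : Set (Pi1LForm L α σ)) : Prop :=
  ∃ B : VBound L α σ,
    ∀ Γ₀ ⊆ Γ, Γ₀.Finite → ∀ F ⊆ B.toSet, F.Finite →
      ∃ (M : LStructure L) (v : (a : α) → M.Dom (σ a)),
        LocalModel M T ∧ (∀ φ ∈ Γ₀, Pi1LForm.Realize φ M v) ∧
          (∀ ψ ∈ F, LPosForm.Realize M ψ v)

/-! ## Cardinality, homogeneity, retractors -/

/-- The cardinality of a structure: that of the disjoint union of its sorts. -/
def LStructure.card {L : LocalLanguage} (M : LStructure L) : Cardinal :=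
  Cardinal.mk (Σ s : L.Sorts, M.Dom s)

/-- The cardinality of a local language. -/
def LocalLanguage.card (L : LocalLanguage) : Cardinal :=
  max Cardinal.aleph0
    (Cardinal.mk (L.Sorts ⊕ (Σ s : L.Sorts, L.Const s) ⊕ (Σ s : L.Sorts, L.Loc s) ⊕
      (Σ (n : ℕ) (ρ : Fin n → L.Sorts), L.Rel n ρ)))

/-- `M` is a (local positively) κ-ultrahomogeneous model of `T`. -/
def IsUltrahomogeneous {L : LocalLanguage} (T : Set (PosSentence L)) (M : LStructure L)
    (κ : Cardinal) : Prop :=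
  ∀ A B : LStructure L, LocalModel A T → LocalModel B T → A.card < κ → B.card < κ →
    ∀ f : LHom A M, f.IsPosEmbedding → ∀ g : LHom A B, ∃ h : LHom B M, h.comp g = f

/-- A retractor of `T`: a local model of `T` such that every homomorphism into a local
model of `T` has a retraction. -/
def IsRetractor {L : LocalLanguage} (T : Set (PosSentence L)) (C : LStructure L) : Prop :=
  LocalModel C T ∧
    ∀ N : LStructure L, LocalModel N T →
      ∀ f : LHom C N, ∃ g : LHom N C, g.comp f = LHom.id C

/-- `M` is κ-universal for a class `K` of structures. -/
def IsUniversal {L : LocalLanguage} (M : LStructure L) (K : LStructure L → Prop)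
    (κ : Cardinal) : Prop :=
  ∀ N : LStructure L, K N → N.card < κ → Nonempty (LHom N M)

/-- `M` is absolutely universal for a class `K` of structures. -/
def IsAbsUniversal {L : LocalLanguage} (M : LStructure L) (K : LStructure L → Prop) : Prop :=
  ∀ N : LStructure L, K N → Nonempty (LHom N M)

/-- Compatibility of two local models of `T`. -/
def Compat {L : LocalLanguage} (T : Set (PosSentence L)) (A B : LStructure L) : Prop :=
  ∃ M : LStructure L, LocalModel M T ∧ Nonempty (LHom A M) ∧ Nonempty (LHom B M)

/-- The local joint (homomorphism) property. -/
def HasLJP {L : LocalLanguage} (T : Set (PosSentence L)) : Prop :=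
  ∀ A B : LStructure L, LocalModel A T → LocalModel B T →
    ∃ M : LStructure L, LocalModel M T ∧ Nonempty (LHom A M) ∧ Nonempty (LHom B M)


/-! ## Parameters -/

/-- A set of parameters in a structure. -/
def ParamSet {L : LocalLanguage} (M : LStructure L) := (s : L.Sorts) → Set (M.Dom s)

/-- Interpretation in `M` of old and new constants of the expanded language. -/
def paramInterp {L : LocalLanguage} (M : LStructure L) (A : ParamSet M) {s : L.Sorts} :
    L.Const s ⊕ (A s) → M.Dom s
  | .inl c => M.constMap c
  | .inr a => a.1

/-- The expansion `L(A)` of `L` by new constants for the parameters `A` of a local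
structure `M`; bounds for pairs involving the new constants are chosen (by locality
axiom (A5)) so that they hold in `M`. -/
noncomputable def LocalLanguage.withParams (L : LocalLanguage) (M : LStructure L)
    (hM : IsLocal M) (A : ParamSet M) : LocalLanguage where
  Sorts := L.Sorts
  Rel := L.Rel
  Const s := L.Const s ⊕ (A s)
  Loc := L.Loc
  locToRel := L.locToRel
  dd0 := L.dd0
  locMul := L.locMul
  locLe := L.locLe
  locMul_assoc := L.locMul_assoc
  dd0_locMul := L.dd0_locMul
  locMul_dd0 := L.locMul_dd0
  locLe_refl := L.locLe_refl
  locLe_trans := L.locLe_trans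
  locLe_antisymm := L.locLe_antisymm
  dd0_locLe := L.dd0_locLe
  locMul_mono := L.locMul_mono
  bound := fun {_s} c₁ c₂ =>
    match c₁, c₂ with
    | .inl c₁, .inl c₂ => L.bound c₁ c₂
    | c₁, c₂ => Classical.choose (hM.total (paramInterp M A c₁) (paramInterp M A c₂))

/-- The natural expansion `M_A` of `M` to an `L(A)`-structure. -/
noncomputable def LStructure.withParams {L : LocalLanguage} (M : LStructure L)
    (hM : IsLocal M) (A : ParamSet M) : LStructure (L.withParams M hM A) where
  Dom := M.Dom
  relMap := M.relMap
  constMap := paramInterp M A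

/-- `M` has the local joint property over `A`: any two local models of `Th₋(M/A)` map
into a common local model of `Th₋(M/A)`. -/
def HasLJPOver {L : LocalLanguage} (M : LStructure L) (hM : IsLocal M) (A : ParamSet M) :
    Prop :=
  HasLJP (ThNeg (M.withParams hM A))

/-- `M` is (local positively) κ-saturated: it realizes every local positive type of
`Th₋(M/A)` on `x` whenever `|x| < κ`, `|A| < κ` and `M` has the local joint property
over `A`. -/
def IsSaturatedAt {L : LocalLanguage} (M : LStructure L) (hM : IsLocal M)
    (κ : Cardinal) : Prop :=
  ∀ A : ParamSet M, Cardinal.mk (Σ s : L.Sorts, A s) < κ → HasLJPOver M hM A →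
    ∀ (α : Type) (σ : α → L.Sorts), Cardinal.mk α < κ →
      ∀ Γ : Set (LPosForm (L.withParams M hM A) α σ),
        IsLType (ThNeg (M.withParams hM A)) Γ →
          ∃ v : (a : α) → M.Dom (σ a), ∀ φ ∈ Γ, LPosForm.Realize (M.withParams hM A) φ v

/-- The local positive type of a tuple over a set of parameters `A`, rendered as the set
of local positive formulas with extra free variables for the parameters of `A` that are
satisfied when those variables are evaluated at the parameters themselves. -/
def ltpOver {L : LocalLanguage} (M : LStructure L) (A : ParamSet M) {α : Type}
    {σ : α → L.Sorts} (v : (a : α) → M.Dom (σ a)) :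
    Set (LPosForm L (α ⊕ Σ s : L.Sorts, A s) (Sum.elim σ (fun p => p.1))) :=
  {φ | φ.Realize M (sval v (fun p => p.2.1))}

/-! ## Substructures -/

/-- A substructure of `M`: a family of subsets closed under the constants (the language
is relational). -/
structure Substruct {L : LocalLanguage} (M : LStructure L) where
  carrier : (s : L.Sorts) → Set (M.Dom s)
  const_mem : ∀ {s : L.Sorts} (c : L.Const s), M.constMap c ∈ carrier s

/-- The induced structure on a substructure. -/
def Substruct.toStruct {L : LocalLanguage} {M : LStructure L} (A : Substruct M) :
    LStructure L where
  Dom s := A.carrier s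
  relMap R x := M.relMap R (fun i => (x i).1)
  constMap c := ⟨M.constMap c, A.const_mem c⟩


/-! ## Topologies -/

/-- The `d`-ball at `a`. -/
def LStructure.ball {L : LocalLanguage} (M : LStructure L) {s : L.Sorts} (d : L.Loc s)
    (a : M.Dom s) : Set (M.Dom s) :=
  {b | M.locRel d a b}

/-- The local positive logic topology on a single sort of `M`: closed sets are the
subsets defined by sets of local positive formulas with parameters in `M` (parameters
being rendered as extra free variables evaluated at themselves). -/
def lpTopologyS {L : LocalLanguage} (M : LStructure L) (s : L.Sorts) :
    TopologicalSpace (M.Dom s) :=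
  TopologicalSpace.generateFrom
    {U | ∃ φ : LPosForm L (Unit ⊕ Σ s' : L.Sorts, M.Dom s')
            (Sum.elim (fun _ => s) (fun p => p.1)),
      U = {x | ¬ LPosForm.Realize M φ (sval (fun _ => x) (fun p => p.2))}}

/-- The space of local positive types of `T` on the variable `(α, σ)`. -/
def LTypeSpace (L : LocalLanguage) (T : Set (PosSentence L)) (α : Type)
    (σ : α → L.Sorts) :=
  {Γ : Set (LPosForm L α σ) // IsLType T Γ}

/-- The local positive logic topology on the space of local positive types: generated by
declaring `⟨φ⟩ = {p : φ ∈ p}` closed for every local positive formula `φ`; its closed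
sets are then exactly the sets `⟨Γ⟩` together with `∅`. -/
instance {L : LocalLanguage} (T : Set (PosSentence L)) (α : Type) (σ : α → L.Sorts) :
    TopologicalSpace (LTypeSpace L T α σ) :=
  TopologicalSpace.generateFrom
    {U | ∃ φ : LPosForm L α σ, U = {p : LTypeSpace L T α σ | φ ∉ p.1}}

/-! ## Completeness and compactness -/

/-- `T` is complete: `T = Th₋(M)` for every local positively closed model `M` of `T`. -/
def IsCompleteTheory {L : LocalLanguage} (T : Set (PosSentence L)) : Prop :=
  ∀ M : LStructure L, IsPC M T → ThNeg M = T

/-- `T` is local positively compact. -/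
def IsLocPosCompact {L : LocalLanguage} (T : Set (PosSentence L)) : Prop :=
  ∀ (s : L.Sorts) (γ : Type), Finite γ →
    ∀ (τ : γ → L.Sorts) (φ : LPosForm L (Fin 2 ⊕ γ) (Sum.elim (fun _ => s) τ)),
      (∀ M : LStructure L, LocalModel M T →
        ∀ (a : M.Dom s) (w : (j : γ) → M.Dom (τ j)),
          ¬ LPosForm.Realize M φ (sval ![a, a] w)) →
      ∀ (B : VBound L (Unit ⊕ γ) (Sum.elim (fun _ => s) τ)) (d : L.Loc s),
        ∃ k : ℕ, 0 < k ∧ ∀ M : LStructure L, LocalModel M T →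
          ¬ ∃ (a : Fin k → M.Dom s) (w : (j : γ) → M.Dom (τ j)),
            ∀ i j : Fin k, i ≠ j →
              B.Holds M (sval (fun _ => a i) w) ∧ M.locRel d (a i) (a j) ∧
                LPosForm.Realize M φ (sval ![a i, a j] w)


/-! ## Auxiliary material for the proof -/

section AuxProof

open Cardinal

variable {L : LocalLanguage}

lemma dpair_comp {C D : Fin 2 → Sort*} (g : ∀ i, C i → D i) (a : C 0) (b : C 1) :
    (fun i => g i (dpair a b i)) = dpair (g 0 a) (g 1 b) := by
  funext i
  match i with
  | ⟨0, _⟩ => rfl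
  | ⟨1, _⟩ => rfl

lemma realize_term_hom {M N : LStructure L} (h : LHom M N) {α : Type} {σ : α → L.Sorts}
    (v : (a : α) → M.Dom (σ a)) : ∀ {s : L.Sorts} (t : LTerm L α σ s),
    h.toFun s (t.realize M v) = t.realize N (fun a => h.toFun (σ a) (v a))
  | _, .var _ => rfl
  | _, .const c => h.map_const c

lemma realize_pos_hom {M N : LStructure L} (h : LHom M N) :
    ∀ {α : Type} {σ : α → L.Sorts} (φ : PosForm L α σ) (v : (a : α) → M.Dom (σ a)),
      φ.Realize M v → φ.Realize N (fun a => h.toFun (σ a) (v a))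
  | α, σ, .rel R ts, v, hr => by
      have e : (fun i => h.toFun _ ((ts i).realize M v))
          = fun i => (ts i).realize N (fun a => h.toFun (σ a) (v a)) :=
        funext fun i => realize_term_hom h v (ts i)
      exact (congrArg (fun w => N.relMap R w) e).mp (h.map_rel R _ hr)
  | _, _, .and φ ψ, v, hr =>
      ⟨realize_pos_hom h φ v hr.1, realize_pos_hom h ψ v hr.2⟩
  | _, _, .or φ ψ, v, hr =>
      hr.imp (realize_pos_hom h φ v) (realize_pos_hom h ψ v)
  | _, _, .ex s φ, v, hr => by
      obtain ⟨x, hx⟩ := hr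
      refine ⟨h.toFun s x, ?_⟩
      have e : (fun o => h.toFun _ (vcons x v o))
          = vcons (h.toFun s x) (fun a => h.toFun _ (v a)) :=
        funext fun o => by cases o <;> rfl
      exact (congrArg (fun w => PosForm.Realize N φ w) e).mp
        (realize_pos_hom h φ (vcons x v) hx)

/-- The inclusion of a substructure. -/
def Substruct.incl {M : LStructure L} (S : Substruct M) : LHom S.toStruct M where
  toFun _ x := x.1
  map_rel _ _ hx := hx
  map_const _ := rfl

lemma sub_locRel {M : LStructure L} (S : Substruct M) {s : L.Sorts} (d : L.Loc s)
    (a b : S.toStruct.Dom s) : S.toStruct.locRel d a b ↔ M.locRel d a.1 b.1 := by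
  show M.relMap (L.locToRel d)
      (fun i => ((dpair (C := fun i => S.toStruct.Dom (![s, s] i)) a b) i).1)
    ↔ M.relMap (L.locToRel d) (dpair (C := fun i => M.Dom (![s, s] i)) a.1 b.1)
  rw [dpair_comp (C := fun i => S.toStruct.Dom (![s, s] i))
    (D := fun i => M.Dom (![s, s] i)) (fun _ x => x.1) a b]

lemma substruct_isLocal {M : LStructure L} (hM : IsLocal M) (S : Substruct M) :
    IsLocal S.toStruct where
  symm d a b hab := (sub_locRel S d b a).mpr (hM.symm d _ _ ((sub_locRel S d a b).mp hab))
  mono d₁ d₂ hle a b hab :=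
    (sub_locRel S d₂ a b).mpr (hM.mono d₁ d₂ hle _ _ ((sub_locRel S d₁ a b).mp hab))
  comp d₁ d₂ a b c h1 h2 := (sub_locRel S _ a c).mpr
    (hM.comp d₁ d₂ _ _ _ ((sub_locRel S _ a b).mp h1) ((sub_locRel S _ b c).mp h2))
  boundAx c₁ c₂ := (sub_locRel S _ _ _).mpr (hM.boundAx c₁ c₂)
  total a b := by
    obtain ⟨d, hd⟩ := hM.total a.1 b.1
    exact ⟨d, (sub_locRel S d a b).mpr hd⟩
  dd0_eq a b := by
    rw [sub_locRel S, hM.dd0_eq]; exact Subtype.ext_iff.symm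

lemma substruct_localModel {M : LStructure L} {T : Set (PosSentence L)} (hM : LocalModel M T)
    (S : Substruct M) : LocalModel S.toStruct T := by
  refine ⟨substruct_isLocal hM.1 S, fun φ hφ hreal => hM.2 φ hφ ?_⟩
  have h2 := realize_pos_hom S.incl φ (fun e => e.elim) hreal
  have e : (fun e : Empty => S.incl.toFun (emptySorts L e) ((fun e : Empty => e.elim) e))
      = (fun e : Empty => (e.elim : M.Dom (emptySorts L e))) := funext fun e => e.elim
  exact (congrArg (fun w => PosForm.Realize M φ w) e).mp h2

/-! ### Codes for positive formulas -/

/-- Codes for terms: a variable index or a constant. -/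
abbrev TermCode (L : LocalLanguage) : Type := ℕ ⊕ Σ s : L.Sorts, L.Const s

/-- Relation symbols of `L`, bundled. -/
abbrev RelSym (L : LocalLanguage) : Type := Σ n : ℕ, Σ ρ : Fin n → L.Sorts, L.Rel n ρ

/-- Labels for formula codes. -/
abbrev LabC (L : LocalLanguage) : Type :=
  (Σ p : RelSym L, Fin p.1 → TermCode L) ⊕ (Bool ⊕ L.Sorts)

/-- Arities of formula-code labels. -/
def arC (L : LocalLanguage) : LabC L → Type
  | .inl _ => Empty
  | .inr (.inl _) => Bool
  | .inr (.inr _) => PUnit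

instance arC_finite (l : LabC L) : Finite (arC L l) := by
  match l with
  | .inl _ => exact inferInstanceAs (Finite Empty)
  | .inr (.inl _) => exact inferInstanceAs (Finite Bool)
  | .inr (.inr _) => exact inferInstanceAs (Finite PUnit.{1})

/-- Codes for positive formulas. -/
abbrev Code (L : LocalLanguage) : Type := WType (arC L)

/-- Extend a partial parameter assignment by one value. -/
def dcons {X : Type} (p : X) (d : ℕ → Option X) : ℕ → Option X
  | 0 => some p
  | m + 1 => d m

/-- Parameter assignment from a finite tuple. -/
def dOf {X : Type} {n : ℕ} (p : Fin n → X) : ℕ → Option X :=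
  fun m => if h : m < n then some (p ⟨m, h⟩) else none

/-- Evaluation of a term code in a structure. -/
def evalT (M : LStructure L) (d : ℕ → Option (Σ s : L.Sorts, M.Dom s)) :
    TermCode L → Option (Σ s : L.Sorts, M.Dom s)
  | .inl m => d m
  | .inr c => some ⟨c.1, M.constMap c.2⟩

/-- Direct evaluation of a formula code in a structure. -/
def evalC (M : LStructure L) : Code L → (ℕ → Option (Σ s : L.Sorts, M.Dom s)) → Prop
  | ⟨.inl ptc, _⟩, d =>
      ∃ x : (i : Fin ptc.1.1) → M.Dom (ptc.1.2.1 i),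
        (∀ i, evalT M d (ptc.2 i) = some ⟨ptc.1.2.1 i, x i⟩) ∧ M.relMap ptc.1.2.2 x
  | ⟨.inr (.inl true), f⟩, d => evalC M (f true) d ∧ evalC M (f false) d
  | ⟨.inr (.inl false), f⟩, d => evalC M (f true) d ∨ evalC M (f false) d
  | ⟨.inr (.inr s), f⟩, d => ∃ x : M.Dom s, evalC M (f PUnit.unit) (dcons ⟨s, x⟩ d)

/-- Encoding of terms. -/
def encT {α : Type} {σ : α → L.Sorts} (e : α → ℕ) : {s : L.Sorts} → LTerm L α σ s → TermCode L
  | _, .var a => .inl (e a)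
  | s, .const c => .inr ⟨s, c⟩

/-- Encoding of positive formulas. -/
def encC : {α : Type} → {σ : α → L.Sorts} → (α → ℕ) → PosForm L α σ → Code L
  | _, _, e, .rel (n := n) (ρ := ρ) R ts =>
      ⟨.inl ⟨⟨n, ρ, R⟩, fun i => encT e (ts i)⟩, fun x => x.elim⟩
  | _, _, e, .and φ ψ => ⟨.inr (.inl true), fun b => cond b (encC e φ) (encC e ψ)⟩
  | _, _, e, .or φ ψ => ⟨.inr (.inl false), fun b => cond b (encC e φ) (encC e ψ)⟩
  | _, _, e, .ex s φ =>
      ⟨.inr (.inr s), fun _ => encC (fun o => Option.elim o 0 (fun a => e a + 1)) φ⟩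

/-- Variables of a term. -/
def tvars {α : Type} {σ : α → L.Sorts} : {s : L.Sorts} → LTerm L α σ s → List α
  | _, .var a => [a]
  | _, .const _ => []

/-- Free variables of a positive formula. -/
def fvars : {α : Type} → {σ : α → L.Sorts} → PosForm L α σ → List α
  | _, _, .rel _ ts => (List.ofFn fun i => tvars (ts i)).flatten
  | _, _, .and φ ψ => fvars φ ++ fvars ψ
  | _, _, .or φ ψ => fvars φ ++ fvars ψ
  | _, _, .ex _ φ => (fvars φ).filterMap id

lemma evalT_encT (M : LStructure L) {α : Type} {σ : α → L.Sorts} (e : α → ℕ)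
    (v : (a : α) → M.Dom (σ a)) {s : L.Sorts} (t : LTerm L α σ s)
    (d : ℕ → Option (Σ s' : L.Sorts, M.Dom s'))
    (hc : ∀ a ∈ tvars t, d (e a) = some ⟨σ a, v a⟩) :
    evalT M d (encT e t) = some ⟨s, t.realize M v⟩ := by
  cases t with
  | var a => exact hc a (by simp [tvars])
  | const c => rfl

theorem evalC_encC (M : LStructure L) :
    ∀ {α : Type} {σ : α → L.Sorts} (φ : PosForm L α σ) (e : α → ℕ)
      (v : (a : α) → M.Dom (σ a)) (d : ℕ → Option (Σ s : L.Sorts, M.Dom s)),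
      (∀ a ∈ fvars φ, d (e a) = some ⟨σ a, v a⟩) →
      (evalC M (encC e φ) d ↔ φ.Realize M v)
  | α, σ, .rel (n := n) (ρ := ρ) R ts, e, v, d, hc => by
      have hterm : ∀ i, evalT M d (encT e (ts i)) = some ⟨ρ i, (ts i).realize M v⟩ := by
        intro i
        refine evalT_encT M e v (ts i) d fun a ha => hc a ?_
        exact List.mem_flatten.mpr ⟨tvars (ts i), List.mem_ofFn.mpr ⟨i, rfl⟩, ha⟩
      show (∃ x : (i : Fin n) → M.Dom (ρ i),
          (∀ i, evalT M d (encT e (ts i)) = some ⟨ρ i, x i⟩) ∧ M.relMap R x)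
        ↔ M.relMap R fun i => (ts i).realize M v
      constructor
      · rintro ⟨x, hx, hR⟩
        have key : x = fun i => (ts i).realize M v := by
          funext i
          have h1 := (hterm i).symm.trans (hx i)
          simpa using h1.symm
        exact key ▸ hR
      · intro hR
        exact ⟨fun i => (ts i).realize M v, hterm, hR⟩
  | _, _, .and φ ψ, e, v, d, hc => by
      show (evalC M (encC e φ) d ∧ evalC M (encC e ψ) d) ↔ _
      exact and_congr
        (evalC_encC M φ e v d fun a ha => hc a (List.mem_append.mpr (Or.inl ha)))
        (evalC_encC M ψ e v d fun a ha => hc a (List.mem_append.mpr (Or.inr ha)))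
  | _, _, .or φ ψ, e, v, d, hc => by
      show (evalC M (encC e φ) d ∨ evalC M (encC e ψ) d) ↔ _
      exact or_congr
        (evalC_encC M φ e v d fun a ha => hc a (List.mem_append.mpr (Or.inl ha)))
        (evalC_encC M ψ e v d fun a ha => hc a (List.mem_append.mpr (Or.inr ha)))
  | _, _, .ex s φ, e, v, d, hc => by
      show (∃ x : M.Dom s,
          evalC M (encC (fun o => Option.elim o 0 (fun a => e a + 1)) φ) (dcons ⟨s, x⟩ d)) ↔ _
      refine exists_congr fun x => ?_
      refine evalC_encC M φ _ (vcons x v) _ fun a ha => ?_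
      match a with
      | none => rfl
      | some a => exact hc a (List.mem_filterMap.mpr ⟨some a, ha, rfl⟩)

/-! ### Reflection from the witness property -/

theorem reflect_of_wit (M : LStructure L) (S : Substruct M)
    (hwit : ∀ (s : L.Sorts) (c : Code L) (n : ℕ) (p : Fin n → Σ s' : L.Sorts, M.Dom s'),
      (∀ i, (p i).2 ∈ S.carrier (p i).1) →
      (∃ x : M.Dom s, evalC M c (dcons ⟨s, x⟩ (dOf p))) →
      ∃ x : M.Dom s, x ∈ S.carrier s ∧ evalC M c (dcons ⟨s, x⟩ (dOf p))) :
    ∀ {α : Type} {σ : α → L.Sorts} (φ : PosForm L α σ) (v : (a : α) → S.toStruct.Dom (σ a)),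
      φ.Realize M (fun a => (v a).1) → φ.Realize S.toStruct v
  | _, _, .rel R ts, v, h => by
      have e : (fun i => ((ts i).realize S.toStruct v).1)
          = (fun i => (ts i).realize M (fun a => (v a).1)) :=
        funext fun i => realize_term_hom S.incl v (ts i)
      show M.relMap R fun i => ((ts i).realize S.toStruct v).1
      rw [e]; exact h
  | _, _, .and φ ψ, v, h => by
      obtain ⟨h1, h2⟩ := h
      exact ⟨reflect_of_wit M S hwit φ v h1, reflect_of_wit M S hwit ψ v h2⟩
  | _, _, .or φ ψ, v, h =>
      h.imp (reflect_of_wit M S hwit φ v) (reflect_of_wit M S hwit ψ v)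
  | α, σ, .ex s φ, v, h => by
      classical
      obtain ⟨x₀, hx₀⟩ := h
      let l : List α := (fvars φ).filterMap id
      let p : Fin l.length → Σ s' : L.Sorts, M.Dom s' := fun i => ⟨_, (v (l.get i)).1⟩
      let e' : Option α → ℕ := fun o => Option.elim o 0 (fun a => l.idxOf a + 1)
      have hcompat : ∀ (y : M.Dom s), ∀ a ∈ fvars φ,
          dcons ⟨s, y⟩ (dOf p) (e' a)
            = some ⟨osort s σ a, vcons y (fun b => (v b).1) a⟩ := by
        intro y a ha
        match a with
        | none => rfl
        | some a =>
          have hmem : a ∈ l := List.mem_filterMap.mpr ⟨some a, ha, rfl⟩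
          have hlt : l.idxOf a < l.length := List.idxOf_lt_length_iff.mpr hmem
          show dOf p (l.idxOf a) = some ⟨σ a, (v a).1⟩
          rw [show dOf p (l.idxOf a) = some (p ⟨l.idxOf a, hlt⟩) from dif_pos hlt]
          exact congrArg (fun b => some (⟨σ b, (v b).1⟩ : Σ s' : L.Sorts, M.Dom s'))
            (List.idxOf_get hlt)
      have h₀ : evalC M (encC e' φ) (dcons ⟨s, x₀⟩ (dOf p)) :=
        (evalC_encC M φ e' (vcons x₀ (fun b => (v b).1)) _ (hcompat x₀)).mpr hx₀
      obtain ⟨x, hxS, hev⟩ :=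
        hwit s (encC e' φ) l.length p (fun i => (v (l.get i)).2) ⟨x₀, h₀⟩
      have hx : φ.Realize M (vcons x (fun b => (v b).1)) :=
        (evalC_encC M φ e' (vcons x (fun b => (v b).1)) _ (hcompat x)).mp hev
      refine ⟨⟨x, hxS⟩, ?_⟩
      refine reflect_of_wit M S hwit φ (vcons ⟨x, hxS⟩ v) ?_
      have e2 : (fun o => ((vcons (⟨x, hxS⟩ : S.toStruct.Dom s) v) o).1)
          = vcons x (fun b => (v b).1) := funext fun o => by cases o <;> rfl
      rw [e2]; exact hx

/-! ### The Skolem closure -/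

/-- Labels for Skolem trees. -/
abbrev LabJ (L : LocalLanguage) : Type :=
  (Σ s : L.Sorts, L.Const s) ⊕ (L.Sorts × Code L × ℕ)

/-- Arities for Skolem-tree labels. -/
def arJ (L : LocalLanguage) : LabJ L → Type
  | .inl _ => Empty
  | .inr x => Fin x.2.2

instance arJ_finite (l : LabJ L) : Finite (arJ L l) := by
  match l with
  | .inl _ => exact inferInstanceAs (Finite Empty)
  | .inr x => exact inferInstanceAs (Finite (Fin x.2.2))

/-- Skolem trees. -/
abbrev JT (L : LocalLanguage) : Type := WType (arJ L)

open Classical in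
/-- Decoding a Skolem tree to an element of `M`. -/
def decJ (M : LStructure L) : JT L → Option (Σ s : L.Sorts, M.Dom s)
  | ⟨.inl sc, _⟩ => some ⟨sc.1, M.constMap sc.2⟩
  | ⟨.inr x, f⟩ =>
      if h : ∃ y : M.Dom x.1, evalC M x.2.1
          (dcons ⟨x.1, y⟩ (fun m => if hm : m < x.2.2 then decJ M (f ⟨m, hm⟩) else none)) then
        some ⟨x.1, h.choose⟩
      else none

/-- The Skolem-closed substructure. -/
def skCar (M : LStructure L) : Substruct M where
  carrier s := {x | ∃ j : JT L, decJ M j = some ⟨s, x⟩}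
  const_mem {s} c := ⟨⟨.inl ⟨s, c⟩, fun x => x.elim⟩, rfl⟩

lemma skCar_wit (M : LStructure L) : ∀ (s : L.Sorts) (c : Code L) (n : ℕ)
    (p : Fin n → Σ s' : L.Sorts, M.Dom s'),
    (∀ i, (p i).2 ∈ (skCar M).carrier (p i).1) →
    (∃ x : M.Dom s, evalC M c (dcons ⟨s, x⟩ (dOf p))) →
    ∃ x : M.Dom s, x ∈ (skCar M).carrier s ∧ evalC M c (dcons ⟨s, x⟩ (dOf p)) := by
  intro s c n p hp hex
  choose jfun hjfun using hp
  have hd : (fun m => if hm : m < n then decJ M (jfun ⟨m, hm⟩) else none) = dOf p := by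
    funext m
    simp only [dOf]
    by_cases hm : m < n
    · rw [dif_pos hm, dif_pos hm, hjfun]
    · rw [dif_neg hm, dif_neg hm]
  have hex' : ∃ y : M.Dom s, evalC M c
      (dcons ⟨s, y⟩ (fun m => if hm : m < n then decJ M (jfun ⟨m, hm⟩) else none)) := by
    rw [hd]; exact hex
  refine ⟨hex'.choose, ⟨⟨.inr (s, c, n), jfun⟩, ?_⟩, ?_⟩
  · show decJ M ⟨.inr (s, c, n), jfun⟩ = _
    rw [decJ.eq_def]
    exact dif_pos hex'
  · have := hex'.choose_spec
    exact (congrArg (fun dd => evalC M c (dcons ⟨s, hex'.choose⟩ dd)) hd).mp this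

/-! ### Cardinality bounds -/

lemma aleph0_le_card : ℵ₀ ≤ L.card := le_max_left _ _

lemma add_le_card {a b : Cardinal} (ha : a ≤ L.card) (hb : b ≤ L.card) : a + b ≤ L.card :=
  (add_le_add ha hb).trans (le_of_eq (Cardinal.add_eq_self aleph0_le_card))

lemma mul_le_card {a b : Cardinal} (ha : a ≤ L.card) (hb : b ≤ L.card) : a * b ≤ L.card :=
  (mul_le_mul' ha hb).trans (le_of_eq (Cardinal.mul_eq_self aleph0_le_card))

lemma mk_sorts_le : #(L.Sorts) ≤ L.card :=
  (Cardinal.mk_le_of_injective (f := Sum.inl) Sum.inl_injective).trans (le_max_right _ _)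

lemma mk_constSig_le : #(Σ s : L.Sorts, L.Const s) ≤ L.card :=
  (Cardinal.mk_le_of_injective (f := fun x => Sum.inr (Sum.inl x))
    (Sum.inr_injective.comp Sum.inl_injective)).trans (le_max_right _ _)

lemma mk_relSym_le : #(RelSym L) ≤ L.card :=
  (Cardinal.mk_le_of_injective (f := fun x => Sum.inr (Sum.inr (Sum.inr x)))
    (Sum.inr_injective.comp (Sum.inr_injective.comp Sum.inr_injective))).trans
    (le_max_right _ _)

lemma mk_sum_le_card {X Y : Type} (hX : #X ≤ L.card) (hY : #Y ≤ L.card) :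
    #(X ⊕ Y) ≤ L.card := by
  rw [Cardinal.mk_sum, Cardinal.lift_id, Cardinal.lift_id]
  exact add_le_card hX hY

lemma mk_prod_le_card {X Y : Type} (hX : #X ≤ L.card) (hY : #Y ≤ L.card) :
    #(X × Y) ≤ L.card := by
  rw [Cardinal.mk_prod, Cardinal.lift_id, Cardinal.lift_id]
  exact mul_le_card hX hY

lemma mk_fin_arrow_le {X : Type} (hX : #X ≤ L.card) (k : ℕ) : #(Fin k → X) ≤ L.card := by
  rw [← Cardinal.power_def]
  exact (Cardinal.power_le_power_right hX).trans
    (Cardinal.pow_le aleph0_le_card (Cardinal.lt_aleph0_of_finite _))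

lemma mk_sigma_le_card {I : Type} {f : I → Type} (hI : #I ≤ L.card)
    (hf : ∀ i, #(f i) ≤ L.card) : #(Σ i, f i) ≤ L.card := by
  rw [Cardinal.mk_sigma]
  refine le_trans (Cardinal.sum_le_sum _ (fun _ => L.card) hf) ?_
  rw [Cardinal.sum_const']
  exact mul_le_card hI le_rfl

lemma mk_termCode_le : #(TermCode L) ≤ L.card :=
  mk_sum_le_card (by rw [Cardinal.mk_nat]; exact aleph0_le_card) mk_constSig_le

lemma mk_labC_le : #(LabC L) ≤ L.card :=
  mk_sum_le_card
    (mk_sigma_le_card mk_relSym_le fun p => mk_fin_arrow_le mk_termCode_le p.1)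
    (mk_sum_le_card ((Cardinal.mk_le_aleph0).trans aleph0_le_card) mk_sorts_le)

lemma mk_code_le : #(Code L) ≤ L.card :=
  (WType.cardinalMk_le_max_aleph0_of_finite).trans (max_le mk_labC_le aleph0_le_card)

lemma mk_labJ_le : #(LabJ L) ≤ L.card :=
  mk_sum_le_card mk_constSig_le
    (mk_prod_le_card mk_sorts_le (mk_prod_le_card mk_code_le
      (by rw [Cardinal.mk_nat]; exact aleph0_le_card)))

lemma mk_JT_le : #(JT L) ≤ L.card :=
  (WType.cardinalMk_le_max_aleph0_of_finite).trans (max_le mk_labJ_le aleph0_le_card)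

lemma skCar_card_le (M : LStructure L) : ((skCar M).toStruct).card ≤ L.card := by
  refine le_trans ?_ mk_JT_le
  refine Cardinal.mk_le_of_injective
    (f := fun q : Σ s : L.Sorts, ((skCar M).carrier s : Set (M.Dom s)) => q.2.2.choose) ?_
  rintro ⟨s1, x1⟩ ⟨s2, x2⟩ heq
  have heq' : x1.2.choose = x2.2.choose := heq
  have h1 := x1.2.choose_spec
  have h2 := x2.2.choose_spec
  rw [heq', h2] at h1
  obtain ⟨hs, hx⟩ := Sigma.ext_iff.mp (Option.some.inj h1)
  subst hs
  rw [Subtype.ext (eq_of_heq hx)]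

/-! ### Small joint models -/

lemma joint_small {T : Set (PosSentence L)} {A N P : LStructure L}
    (hP : LocalModel P T) (gA : LHom A P) (gN : LHom N P) :
    ∃ (Q : LStructure L) (_ : LHom A Q) (_ : LHom N Q),
      LocalModel Q T ∧ Q.card ≤ A.card + N.card := by
  classical
  let S : Substruct P :=
    ⟨fun s => Set.range (gA.toFun s) ∪ Set.range (gN.toFun s),
      fun {s} c => Or.inl ⟨A.constMap c, gA.map_const c⟩⟩
  refine ⟨S.toStruct,
    ⟨fun s a => ⟨gA.toFun s a, Or.inl ⟨a, rfl⟩⟩, fun R x h => gA.map_rel R x h,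
      fun c => Subtype.ext (gA.map_const c)⟩,
    ⟨fun s b => ⟨gN.toFun s b, Or.inr ⟨b, rfl⟩⟩, fun R x h => gN.map_rel R x h,
      fun c => Subtype.ext (gN.map_const c)⟩,
    substruct_localModel hP S, ?_⟩
  have hsurj : Function.Surjective
      (fun z : (Σ s : L.Sorts, A.Dom s) ⊕ (Σ s : L.Sorts, N.Dom s) =>
        match z with
        | .inl q => (⟨q.1, ⟨gA.toFun q.1 q.2, Or.inl ⟨q.2, rfl⟩⟩⟩ :
            Σ s : L.Sorts, S.carrier s)
        | .inr q => ⟨q.1, ⟨gN.toFun q.1 q.2, Or.inr ⟨q.2, rfl⟩⟩⟩) := by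
    rintro ⟨s, x, (⟨a, rfl⟩ | ⟨b, rfl⟩)⟩
    · exact ⟨.inl ⟨s, a⟩, rfl⟩
    · exact ⟨.inr ⟨s, b⟩, rfl⟩
  refine le_trans (Cardinal.mk_le_of_surjective hsurj) ?_
  rw [Cardinal.mk_sum, Cardinal.lift_id, Cardinal.lift_id]
  exact le_of_eq rfl

end AuxProof


/-- If `T` has the local joint property and `κ > |L|`, then every
κ-ultrahomogeneous local model of `T` is κ-universal for the local models of `T`; in
particular `T` has at most one retractor up to isomorphism and any retractor of `T` is
absolutely universal for the local models of `T`. -/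
theorem ultrahomogeneous_is_universal_and_retractor_unique
    {L : LocalLanguage} (T : Set (PosSentence L))
    (hT : IsNegLocalTheory T) (hsat : LocSat T) (hljp : HasLJP T)
    (κ : Cardinal) (hκ : L.card < κ) :
    (∀ M : LStructure L, LocalModel M T → IsUltrahomogeneous T M κ →
        IsUniversal M (fun N => LocalModel N T) κ) ∧
    (∀ C₁ C₂ : LStructure L, IsRetractor T C₁ → IsRetractor T C₂ → Isomorphic C₁ C₂) ∧
    (∀ C : LStructure L, IsRetractor T C → IsAbsUniversal C (fun N => LocalModel N T)) := by
  have hℵκ : Cardinal.aleph0 ≤ κ := le_of_lt (lt_of_le_of_lt aleph0_le_card hκ)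
  refine ⟨?_, ?_, ?_⟩
  · intro M hM hUH N hN hNc
    have hAmod : LocalModel (skCar M).toStruct T := substruct_localModel hM (skCar M)
    have hAcard : ((skCar M).toStruct).card < κ := lt_of_le_of_lt (skCar_card_le M) hκ
    have hemb : ((skCar M).incl).IsPosEmbedding := fun α σ φ v h =>
      reflect_of_wit M (skCar M) (skCar_wit M) φ v h
    obtain ⟨P, hP, ⟨gA⟩, ⟨gN⟩⟩ := hljp (skCar M).toStruct N hAmod hN
    obtain ⟨Q, qA, qN, hQ, hQc⟩ := joint_small hP gA gN
    have hQcard : Q.card < κ :=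
      lt_of_le_of_lt hQc (Cardinal.add_lt_of_lt hℵκ hAcard hNc)
    obtain ⟨h, -⟩ := hUH (skCar M).toStruct Q hAmod hQ hAcard hQcard (skCar M).incl hemb qA
    exact ⟨h.comp qN⟩
  · intro C₁ C₂ h1 h2
    obtain ⟨P, hP, ⟨u⟩, ⟨w⟩⟩ := hljp C₁ C₂ h1.1 h2.1
    obtain ⟨rw1, hrw⟩ := h2.2 P hP w
    obtain ⟨r, hr⟩ := h1.2 C₂ h2.1 (rw1.comp u)
    obtain ⟨t, ht⟩ := h2.2 C₁ h1.1 r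
    have hg : t = rw1.comp u := by
      calc t = t.comp (r.comp (rw1.comp u)) := by rw [hr]; rfl
        _ = (t.comp r).comp (rw1.comp u) := rfl
        _ = rw1.comp u := by rw [ht]; rfl
    exact ⟨rw1.comp u, r, hr, by rw [← hg]; exact ht⟩
  · intro C hC N hN
    obtain ⟨P, hP, ⟨hc⟩, ⟨hn⟩⟩ := hljp C N hC.1 hN
    obtain ⟨r, _⟩ := hC.2 P hP hc
    exact ⟨r.comp hn⟩
end
end

section
/- Let T be a locally satisfiable negative local theory and M a local positively closed model of T. Then any two members A1, A2 of Com(M) are compatible with each other. In particular, compatibility is an equivalence relation on the class of local positively closed models of T, and Com^pc(M) is the equivalence class of M. -/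
noncomputable section

/-! ### Auxiliary machinery for Statement 14 -/

section Aux14

variable {L : LocalLanguage}

lemma fin2_app_eq_dpair {C : Fin 2 → Sort*} (f : (k : Fin 2) → C k) :
    f = dpair (f 0) (f 1) := by
  funext k
  match k with
  | ⟨0, _⟩ => rfl
  | ⟨1, _⟩ => rfl

lemma tpair_realize {Nt : LStructure L} {α : Type} {σ : α → L.Sorts} {s t : L.Sorts}
    (t₁ : LTerm L α σ s) (t₂ : LTerm L α σ t) (val : (a : α) → Nt.Dom (σ a)) :
    (fun k => (tpair t₁ t₂ k).realize Nt val)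
      = dpair (t₁.realize Nt val) (t₂.realize Nt val) := by
  funext k
  match k with
  | ⟨0, _⟩ => rfl
  | ⟨1, _⟩ => rfl

lemma vcons_hom {M N : LStructure L} (f : (s : L.Sorts) → M.Dom s → N.Dom s)
    {α : Type} {σ : α → L.Sorts} {s : L.Sorts} (x : M.Dom s) (v : (a : α) → M.Dom (σ a)) :
    (fun o => f _ (vcons x v o)) = vcons (f s x) (fun a => f _ (v a)) := by
  funext o; cases o <;> rfl

lemma LTerm.realize_hom {M N : LStructure L} (f : LHom M N) {α : Type} {σ : α → L.Sorts}
    (v : (a : α) → M.Dom (σ a)) : ∀ {s : L.Sorts} (t : LTerm L α σ s),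
    t.realize N (fun a => f.toFun _ (v a)) = f.toFun s (t.realize M v)
  | _, .var _ => rfl
  | _, .const c => (f.map_const c).symm

lemma PosForm.realize_hom {M N : LStructure L} (f : LHom M N) :
    ∀ {α : Type} {σ : α → L.Sorts} (φ : PosForm L α σ) (v : (a : α) → M.Dom (σ a)),
    φ.Realize M v → φ.Realize N (fun a => f.toFun _ (v a))
  | _, _, .rel R ts, v, h => by
      show N.relMap R _
      have e : (fun i => (ts i).realize N (fun a => f.toFun _ (v a)))
          = fun i => f.toFun _ ((ts i).realize M v) := by
        funext i; exact LTerm.realize_hom f v (ts i)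
      rw [e]
      exact f.map_rel R _ h
  | _, _, .and φ ψ, v, h => ⟨realize_hom f φ v h.1, realize_hom f ψ v h.2⟩
  | _, _, .or φ ψ, v, h =>
      h.elim (fun h => Or.inl (realize_hom f φ v h)) (fun h => Or.inr (realize_hom f ψ v h))
  | _, _, .ex s φ, v, h => by
      obtain ⟨x, hx⟩ := h
      exact ⟨f.toFun s x, by
        have := realize_hom f φ (vcons x v) hx
        rwa [vcons_hom] at this⟩

lemma LTerm.realize_castSort {M : LStructure L} {α : Type} {σ : α → L.Sorts}
    {s s' : L.Sorts} (h : s = s') (t : LTerm L α σ s) (v : (a : α) → M.Dom (σ a)) :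
    (h ▸ t).realize M v = h ▸ (t.realize M v) := by cases h; rfl

def LTerm.relabel {α β : Type} {σ : α → L.Sorts} {τ : β → L.Sorts}
    (m : α → β) (hm : ∀ a, τ (m a) = σ a) : ∀ {s : L.Sorts}, LTerm L α σ s → LTerm L β τ s
  | _, .var a => (hm a) ▸ (LTerm.var (m a))
  | _, .const c => .const c

def omap_sorts {α β : Type} {σ : α → L.Sorts} {τ : β → L.Sorts} (s : L.Sorts)
    (m : α → β) (hm : ∀ a, τ (m a) = σ a) :
    ∀ o : Option α, osort s τ (Option.map m o) = osort s σ o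
  | none => rfl
  | some a => hm a

def PosForm.relabel : {α β : Type} → {σ : α → L.Sorts} → {τ : β → L.Sorts} →
    (m : α → β) → (hm : ∀ a, τ (m a) = σ a) → PosForm L α σ → PosForm L β τ
  | _, _, _, _, m, hm, .rel R ts => .rel R (fun k => (ts k).relabel m hm)
  | _, _, _, _, m, hm, .and φ ψ => .and (φ.relabel m hm) (ψ.relabel m hm)
  | _, _, _, _, m, hm, .or φ ψ => .or (φ.relabel m hm) (ψ.relabel m hm)
  | _, _, _, _, m, hm, .ex s φ => .ex s (φ.relabel (Option.map m) (omap_sorts s m hm))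

def vpull {M : LStructure L} {α β : Type} {σ : α → L.Sorts} {τ : β → L.Sorts}
    (m : α → β) (hm : ∀ a, τ (m a) = σ a) (v : (b : β) → M.Dom (τ b)) :
    (a : α) → M.Dom (σ a) := fun a => (hm a) ▸ (v (m a))

lemma LTerm.realize_relabel {M : LStructure L} {α β : Type} {σ : α → L.Sorts}
    {τ : β → L.Sorts} (m : α → β) (hm : ∀ a, τ (m a) = σ a) {s : L.Sorts}
    (t : LTerm L α σ s) (v : (b : β) → M.Dom (τ b)) :
    (t.relabel m hm).realize M v = t.realize M (vpull m hm v) := by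
  cases t with
  | var a => exact LTerm.realize_castSort (hm a) _ v
  | const c => rfl

lemma vpull_vcons {M : LStructure L} {α β : Type} {σ : α → L.Sorts} {τ : β → L.Sorts}
    (m : α → β) (hm : ∀ a, τ (m a) = σ a) {s : L.Sorts} (x : M.Dom s)
    (v : (b : β) → M.Dom (τ b)) :
    vpull (Option.map m) (omap_sorts s m hm) (vcons (σ := τ) x v)
      = vcons x (vpull m hm v) := by
  funext o
  cases o with
  | none => rfl
  | some a => rfl

lemma PosForm.realize_relabel {M : LStructure L} :
    ∀ {α β : Type} {σ : α → L.Sorts} {τ : β → L.Sorts} (m : α → β)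
      (hm : ∀ a, τ (m a) = σ a) (φ : PosForm L α σ) (v : (b : β) → M.Dom (τ b)),
    (φ.relabel m hm).Realize M v ↔ φ.Realize M (vpull m hm v)
  | _, _, _, _, m, hm, .rel R ts, v => by
      show M.relMap R _ ↔ M.relMap R _
      rw [show (fun k => ((ts k).relabel m hm).realize M v)
          = fun k => (ts k).realize M (vpull m hm v) from
        funext fun k => LTerm.realize_relabel m hm (ts k) v]
  | _, _, _, _, m, hm, .and φ ψ, v =>
      and_congr (realize_relabel m hm φ v) (realize_relabel m hm ψ v)
  | _, _, _, _, m, hm, .or φ ψ, v =>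
      or_congr (realize_relabel m hm φ v) (realize_relabel m hm ψ v)
  | _, _, _, _, m, hm, .ex s φ, v => by
      show (∃ x, _) ↔ (∃ x, _)
      refine exists_congr fun x => ?_
      rw [realize_relabel _ _ φ (vcons x v), vpull_vcons]

end Aux14
section Aux14b

variable {L : LocalLanguage}

lemma dcast_apply {δ : Type} (τδ : δ → L.Sorts) {N : LStructure L}
    (W : (d : δ) → N.Dom (τδ d)) {d d' : δ} (h : d' = d) (h2 : τδ d' = τδ d) :
    h2 ▸ W d' = W d := by cases h; rfl

lemma realize_foldr_and {M : LStructure L} {α : Type} {σ : α → L.Sorts}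
    (l : List (PosForm L α σ)) (base : PosForm L α σ) (v : (a : α) → M.Dom (σ a)) :
    (l.foldr .and base).Realize M v ↔ (∀ ψ ∈ l, ψ.Realize M v) ∧ base.Realize M v := by
  induction l with
  | nil => simp
  | cons h t ih =>
      show (h.Realize M v ∧ (t.foldr .and base).Realize M v) ↔ _
      rw [ih]
      simp only [List.mem_cons]
      constructor
      · rintro ⟨h1, h2, h3⟩
        exact ⟨fun ψ hψ => hψ.elim (fun e => e ▸ h1) (h2 ψ), h3⟩
      · rintro ⟨h1, h3⟩
        exact ⟨h1 h (Or.inl rfl), fun ψ hψ => h1 ψ (Or.inr hψ), h3⟩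

lemma exists_closure {β : Type} {σβ : β → L.Sorts} (γ : Type) [Finite γ]
    (τ : γ → L.Sorts) (φ : PosForm L (γ ⊕ β) (Sum.elim τ σβ)) :
    ∃ Φ : PosForm L β σβ, ∀ (N : LStructure L) (v₀ : (b : β) → N.Dom (σβ b)),
      Φ.Realize N v₀ ↔ ∃ w : (g : γ) → N.Dom (τ g), φ.Realize N (sval w v₀) := by
  have P : ∀ (γ : Type), Finite γ → ∀ (τ : γ → L.Sorts)
      (φ : PosForm L (γ ⊕ β) (Sum.elim τ σβ)),
      ∃ Φ : PosForm L β σβ, ∀ (N : LStructure L) (v₀ : (b : β) → N.Dom (σβ b)),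
        Φ.Realize N v₀ ↔ ∃ w : (g : γ) → N.Dom (τ g), φ.Realize N (sval w v₀) := by
    intro γ hγ
    refine Finite.induction_empty_option (P := fun γ => ∀ (τ : γ → L.Sorts)
      (φ : PosForm L (γ ⊕ β) (Sum.elim τ σβ)),
      ∃ Φ : PosForm L β σβ, ∀ (N : LStructure L) (v₀ : (b : β) → N.Dom (σβ b)),
        Φ.Realize N v₀ ↔ ∃ w : (g : γ) → N.Dom (τ g), φ.Realize N (sval w v₀))
      ?_ ?_ ?_ γ
    · -- transport along equivalence
      intro α δ e hP τδ φ
      have hm : ∀ a : δ ⊕ β, Sum.elim (fun g => τδ (e g)) σβ (Sum.map e.symm id a)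
          = Sum.elim τδ σβ a := by
        rintro (d | b)
        · exact congrArg τδ (e.apply_symm_apply d)
        · rfl
      obtain ⟨Φ, hΦ⟩ := hP (fun g => τδ (e g)) (φ.relabel (Sum.map e.symm id) hm)
      refine ⟨Φ, fun N v₀ => ?_⟩
      rw [hΦ]
      constructor
      · rintro ⟨w, hw⟩
        rw [PosForm.realize_relabel] at hw
        refine ⟨fun d => (congrArg τδ (e.apply_symm_apply d)) ▸ w (e.symm d), ?_⟩
        have : vpull (Sum.map e.symm id) hm (sval w v₀)
            = sval (fun d => (congrArg τδ (e.apply_symm_apply d)) ▸ w (e.symm d)) v₀ := by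
          funext a
          cases a with
          | inl d => rfl
          | inr b => rfl
        rwa [this] at hw
      · rintro ⟨W, hW⟩
        refine ⟨fun g => W (e g), ?_⟩
        rw [PosForm.realize_relabel]
        have : vpull (Sum.map e.symm id) hm (sval (fun g => W (e g)) v₀) = sval W v₀ := by
          funext a
          cases a with
          | inl d => exact dcast_apply τδ W (e.apply_symm_apply d) _
          | inr b => rfl
        rwa [this]
    · -- empty
      intro τ φ
      have hm : ∀ a : PEmpty ⊕ β, σβ (Sum.elim (fun g => g.elim) id a) = Sum.elim τ σβ a := by
        rintro (g | b)
        · exact g.elim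
        · rfl
      refine ⟨φ.relabel (Sum.elim (fun g => g.elim) id) hm, fun N v₀ => ?_⟩
      rw [PosForm.realize_relabel]
      have hv : vpull (Sum.elim (fun g => g.elim) id) hm v₀
          = sval (fun g : PEmpty => g.elim) v₀ := by
        funext a
        cases a with
        | inl g => exact g.elim
        | inr b => rfl
      rw [hv]
      constructor
      · intro h
        exact ⟨fun g => g.elim, h⟩
      · rintro ⟨w, hw⟩
        have : sval w v₀ = sval (fun g : PEmpty => g.elim) v₀ := by
          funext a
          cases a with
          | inl g => exact g.elim
          | inr b => rfl
        rwa [this] at hw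
    · -- option step
      intro δ _ hP τ φ
      have hm : ∀ a : Option δ ⊕ β,
          (osort (τ none) (Sum.elim (fun d => τ (some d)) σβ))
            ((fun a : Option δ ⊕ β => match a with
              | .inl none => none
              | .inl (some d) => some (.inl d)
              | .inr b => some (.inr b)) a) = Sum.elim τ σβ a := by
        rintro ((_ | d) | b) <;> rfl
      obtain ⟨Φ, hΦ⟩ := hP (fun d => τ (some d))
        (.ex (τ none) (φ.relabel _ hm))
      refine ⟨Φ, fun N v₀ => ?_⟩
      rw [hΦ]
      constructor
      · rintro ⟨w, x, hw⟩
        rw [PosForm.realize_relabel] at hw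
        refine ⟨fun g => match g with | none => x | some d => w d, ?_⟩
        have : vpull _ hm (vcons x (sval w v₀))
            = sval (fun g : Option δ => match g with | none => x | some d => w d) v₀ := by
          funext a
          rcases a with (_ | d) | b <;> rfl
        rwa [this] at hw
      · rintro ⟨W, hW⟩
        refine ⟨fun d => W (some d), W none, ?_⟩
        rw [PosForm.realize_relabel]
        have : vpull _ hm (vcons (W none) (sval (fun d => W (some d)) v₀)) = sval W v₀ := by
          funext a
          rcases a with (_ | d) | b <;> rfl
        rwa [this]
  exact P γ ‹_› τ φ

end Aux14b
section FilPow

variable {L : LocalLanguage} (Nb : LStructure L) (I' : Type) (U : Filter I')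

def pwSetoid (s : L.Sorts) : Setoid (I' → Nb.Dom s) where
  r f g := {i | f i = g i} ∈ U
  iseqv := by
    refine ⟨fun f => Filter.univ_mem' (fun i => rfl), ?_, ?_⟩
    · intro f g h
      exact Filter.mem_of_superset h (fun i hi => hi.symm)
    · intro f g h h1 h2
      exact Filter.mem_of_superset (Filter.inter_mem h1 h2)
        (fun i hi => hi.1.trans hi.2)

def FilPow : LStructure L where
  Dom s := Quotient (pwSetoid Nb I' U s)
  relMap {n ρ} R x := ∃ F : (k : Fin n) → (I' → Nb.Dom (ρ k)),
    (∀ k, Quotient.mk (pwSetoid Nb I' U (ρ k)) (F k) = x k) ∧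
    {i | Nb.relMap R (fun k => F k i)} ∈ U
  constMap {s} c := Quotient.mk (pwSetoid Nb I' U s) (fun _ => Nb.constMap c)

variable {Nb I' U}

lemma filpow_term {α : Type} {σ : α → L.Sorts}
    (v : (a : α) → (FilPow Nb I' U).Dom (σ a))
    (V : (a : α) → I' → Nb.Dom (σ a))
    (hV : ∀ a, Quotient.mk (pwSetoid Nb I' U (σ a)) (V a) = v a) :
    ∀ {s : L.Sorts} (t : LTerm L α σ s),
      Quotient.mk (pwSetoid Nb I' U s) (fun i => t.realize Nb (fun a => V a i))
        = t.realize (FilPow Nb I' U) v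
  | _, .var a => hV a
  | _, .const _ => rfl

lemma filpow_los {α : Type} {σ : α → L.Sorts} :
    ∀ (φ : PosForm L α σ) (v : (a : α) → (FilPow Nb I' U).Dom (σ a))
      (V : (a : α) → I' → Nb.Dom (σ a)),
      (∀ a, Quotient.mk (pwSetoid Nb I' U (σ a)) (V a) = v a) →
      φ.Realize (FilPow Nb I' U) v →
      {i | φ.Realize Nb (fun a => V a i)} ∈ U
  | .rel R ts, v, V, hV, h => by
      obtain ⟨F, hF, hs⟩ := h
      have hk : ∀ k, {i | F k i = (ts k).realize Nb (fun a => V a i)} ∈ U := by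
        intro k
        have : Quotient.mk (pwSetoid Nb I' U _) (F k)
            = Quotient.mk (pwSetoid Nb I' U _) (fun i => (ts k).realize Nb (fun a => V a i)) := by
          rw [hF k, filpow_term v V hV (ts k)]
        exact Quotient.exact this
      have hbig : ({i | Nb.relMap R (fun k => F k i)} ∩
          ⋂ k, {i | F k i = (ts k).realize Nb (fun a => V a i)}) ∈ U :=
        Filter.inter_mem hs ((Filter.iInter_mem).mpr hk)
      refine Filter.mem_of_superset hbig ?_
      rintro i ⟨hi1, hi2⟩
      simp only [Set.mem_iInter] at hi2
      show Nb.relMap R _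
      have : (fun k => (ts k).realize Nb (fun a => V a i)) = fun k => F k i := by
        funext k; exact (hi2 k).symm
      rw [this]
      exact hi1
  | .and φ ψ, v, V, hV, h => by
      refine Filter.mem_of_superset
        (Filter.inter_mem (filpow_los φ v V hV h.1) (filpow_los ψ v V hV h.2)) ?_
      rintro i ⟨h1, h2⟩
      exact ⟨h1, h2⟩
  | .or φ ψ, v, V, hV, h => by
      rcases h with h | h
      · exact Filter.mem_of_superset (filpow_los φ v V hV h) (fun i hi => Or.inl hi)
      · exact Filter.mem_of_superset (filpow_los ψ v V hV h) (fun i hi => Or.inr hi)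
  | .ex s φ, v, V, hV, h => by
      obtain ⟨x, hx⟩ := h
      obtain ⟨g, hg⟩ := Quotient.exists_rep x
      have := filpow_los φ (vcons x v)
        (fun o => match o with | none => g | some a => V a)
        (fun o => match o with | none => hg | some a => hV a) hx
      refine Filter.mem_of_superset this ?_
      intro i hi
      refine ⟨g i, ?_⟩
      have : vcons (σ := σ) (g i) (fun a => V a i)
          = fun o => (match o with | none => g | some a => V a : (I' → Nb.Dom (osort s σ o))) i := by
        funext o; cases o <;> rfl
      rwa [this]

lemma filpow_locRel_intro {s : L.Sorts} (d : L.Loc s) (F G : I' → Nb.Dom s)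
    (h : {i | Nb.locRel d (F i) (G i)} ∈ U) :
    (FilPow Nb I' U).locRel d (Quotient.mk (pwSetoid Nb I' U s) F)
      (Quotient.mk (pwSetoid Nb I' U s) G) := by
  refine ⟨dpair (C := fun k => I' → Nb.Dom (![s,s] k)) F G, fun k => ?_, ?_⟩
  · match k with
    | ⟨0, _⟩ => rfl
    | ⟨1, _⟩ => rfl
  · refine Filter.mem_of_superset h fun i hi => ?_
    show Nb.relMap _ _
    have : (fun k => dpair (C := fun k => I' → Nb.Dom (![s,s] k)) F G k i)
        = dpair (C := fun k => Nb.Dom (![s,s] k)) (F i) (G i) := by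
      funext k
      match k with
      | ⟨0, _⟩ => rfl
      | ⟨1, _⟩ => rfl
    rw [this]
    exact hi

lemma filpow_locRel_elim {s : L.Sorts} {d : L.Loc s} {a b : (FilPow Nb I' U).Dom s}
    (h : (FilPow Nb I' U).locRel d a b) :
    ∃ F G : I' → Nb.Dom s, Quotient.mk (pwSetoid Nb I' U s) F = a ∧
      Quotient.mk (pwSetoid Nb I' U s) G = b ∧
      {i | Nb.locRel d (F i) (G i)} ∈ U := by
  obtain ⟨F, hF, hs⟩ := h
  refine ⟨F 0, F 1, hF 0, hF 1, Filter.mem_of_superset hs fun i hi => ?_⟩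
  show Nb.relMap _ (dpair (F 0 i) (F 1 i))
  have : dpair (F 0 i) (F 1 i) = fun k => F k i := by
    funext k
    match k with
    | ⟨0, _⟩ => rfl
    | ⟨1, _⟩ => rfl
  rw [this]
  exact hi

end FilPow
section Stage

attribute [local instance] Classical.propDecidable

variable {L : LocalLanguage}

structure LAtom (N : LStructure L) : Type where
  n : ℕ
  ρ : Fin n → L.Sorts
  R : L.Rel n ρ
  args : (k : Fin n) → N.Dom (ρ k) ⊕ L.Const (ρ k)
  holds : N.relMap R (fun k => Sum.elim id N.constMap (args k))

noncomputable def LAtom.elems {N : LStructure L} (A : LAtom N) : Finset (Σ s, N.Dom s) :=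
  Finset.univ.biUnion fun k => match A.args k with
    | .inl x => {⟨A.ρ k, x⟩}
    | .inr _ => ∅

noncomputable def stageElems {N : LStructure L} (i : Finset (LAtom N)) :
    Finset (Σ s, N.Dom s) :=
  i.biUnion LAtom.elems

lemma mem_stageElems {N : LStructure L} {i : Finset (LAtom N)} {A : LAtom N} (hA : A ∈ i)
    {k : Fin A.n} {x : N.Dom (A.ρ k)} (h : A.args k = .inl x) :
    (⟨A.ρ k, x⟩ : Σ s, N.Dom s) ∈ stageElems i := by
  refine Finset.mem_biUnion.mpr ⟨A, hA, ?_⟩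
  refine Finset.mem_biUnion.mpr ⟨k, Finset.mem_univ k, ?_⟩
  rw [h]
  exact Finset.mem_singleton_self _

noncomputable def stageFilter {N : LStructure L} : Filter (Finset (LAtom N)) where
  sets := {S | ∃ i₀, {i | i₀ ⊆ i} ⊆ S}
  univ_sets := ⟨∅, fun _ _ => trivial⟩
  sets_of_superset := by rintro x y ⟨i₀, h⟩ hsub; exact ⟨i₀, fun i hi => hsub (h hi)⟩
  inter_sets := fun ⟨i₀, h₀⟩ ⟨i₁, h₁⟩ => ⟨i₀ ∪ i₁, fun i hi =>
    ⟨h₀ (fun a ha => hi (Finset.mem_union_left _ ha)),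
     h₁ (fun a ha => hi (Finset.mem_union_right _ ha))⟩⟩

lemma stageFilter_up {N : LStructure L} (i₀ : Finset (LAtom N)) :
    {i | i₀ ⊆ i} ∈ (stageFilter (N := N)) := ⟨i₀, fun _ h => h⟩

lemma stageFilter_nonempty {N : LStructure L} {S : Set (Finset (LAtom N))}
    (h : S ∈ (stageFilter (N := N))) : S.Nonempty := by
  obtain ⟨i₀, hi⟩ := h
  exact ⟨i₀, hi (fun a ha => ha)⟩

abbrev SCtx (N : LStructure L) (i : Finset (LAtom N)) (β : Type) : Type :=
  {e : Σ s, N.Dom s // e ∈ stageElems i} ⊕ β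

abbrev sctxSort {N : LStructure L} {β : Type} (σβ : β → L.Sorts)
    (i : Finset (LAtom N)) : SCtx N i β → L.Sorts :=
  Sum.elim (fun e => e.1.1) σβ

def SCtx.v {N : LStructure L} {i : Finset (LAtom N)} {β : Type}
    (e : {e : Σ s, N.Dom s // e ∈ stageElems i}) : SCtx N i β := Sum.inl e

def SCtx.p {N : LStructure L} {i : Finset (LAtom N)} {β : Type} (b : β) :
    SCtx N i β := Sum.inr b

noncomputable def varOf {N : LStructure L} {β : Type} {σβ : β → L.Sorts}
    (i : Finset (LAtom N)) (e : {e : Σ s, N.Dom s // e ∈ stageElems i}) :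
    LTerm L (SCtx N i β) (sctxSort σβ i) e.1.1 :=
  LTerm.var (SCtx.v e)

noncomputable def varParam {N : LStructure L} {β : Type} {σβ : β → L.Sorts}
    (i : Finset (LAtom N)) (b : β) :
    LTerm L (SCtx N i β) (sctxSort σβ i) (σβ b) :=
  LTerm.var (SCtx.p b)

noncomputable def argTerm {N : LStructure L} {β : Type} (σβ : β → L.Sorts)
    (i : Finset (LAtom N)) (A : LAtom N) (hA : A ∈ i) (k : Fin A.n) :
    LTerm L (SCtx N i β) (sctxSort σβ i) (A.ρ k) :=
  match h : A.args k with
  | .inl x => varOf i ⟨⟨A.ρ k, x⟩, mem_stageElems hA h⟩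
  | .inr c => .const c

lemma argTerm_realize_inl {N : LStructure L} {β : Type} {σβ : β → L.Sorts}
    {i : Finset (LAtom N)} {A : LAtom N} (hA : A ∈ i) {k : Fin A.n} {x : N.Dom (A.ρ k)}
    (h : A.args k = .inl x) {Nt : LStructure L}
    (val : (a : SCtx N i β) → Nt.Dom (sctxSort σβ i a)) :
    (argTerm σβ i A hA k).realize Nt val
      = val (SCtx.v ⟨⟨A.ρ k, x⟩, mem_stageElems hA h⟩) := by
  unfold argTerm
  split
  · next x' hx' =>
      rw [h] at hx'
      injection hx' with e
      subst e
      rfl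
  · next c hc =>
      rw [h] at hc
      cases hc

lemma argTerm_realize_inr {N : LStructure L} {β : Type} {σβ : β → L.Sorts}
    {i : Finset (LAtom N)} {A : LAtom N} (hA : A ∈ i) {k : Fin A.n} {c : L.Const (A.ρ k)}
    (h : A.args k = .inr c) {Nt : LStructure L}
    (val : (a : SCtx N i β) → Nt.Dom (sctxSort σβ i a)) :
    (argTerm σβ i A hA k).realize Nt val = Nt.constMap c := by
  unfold argTerm
  split
  · next x' hx' =>
      rw [h] at hx'
      cases hx'
  · next c' hc =>
      rw [h] at hc
      injection hc with e
      subst e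
      rfl

lemma atomF_realize {N : LStructure L} {β : Type} {σβ : β → L.Sorts}
    {i : Finset (LAtom N)} (A : LAtom N) (hA : A ∈ i) {Nt : LStructure L}
    (val : (a : SCtx N i β) → Nt.Dom (sctxSort σβ i a))
    (w' : (x : Σ s, N.Dom s) → Nt.Dom x.1)
    (hval : ∀ (e : Σ s, N.Dom s) (he : e ∈ stageElems i),
      val (SCtx.v ⟨e, he⟩) = w' e) :
    (PosForm.rel A.R (fun k => argTerm σβ i A hA k)).Realize Nt val
      ↔ Nt.relMap A.R (fun k => Sum.elim (fun x => w' ⟨A.ρ k, x⟩) Nt.constMap (A.args k)) := by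
  have e : (fun k => (argTerm σβ i A hA k).realize Nt val)
      = (fun k => Sum.elim (fun x => w' ⟨A.ρ k, x⟩) Nt.constMap (A.args k)) := by
    funext k
    rcases hk : A.args k with x | c
    · rw [argTerm_realize_inl hA hk val]
      exact hval _ _
    · rw [argTerm_realize_inr hA hk val]
      rfl
  show Nt.relMap _ _ ↔ _
  rw [e]

noncomputable def legForm {N M : LStructure L} (i : Finset (LAtom N))
    (anchor : (s : L.Sorts) → N.Dom s → M.Dom s)
    (e1 : {s : L.Sorts} → N.Dom s → L.Loc s)
    (e : {e : Σ s, N.Dom s // e ∈ stageElems i}) :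
    PosForm L (SCtx N i (Σ s, M.Dom s)) (sctxSort Sigma.fst i) :=
  .rel (L.locToRel (e1 e.1.2))
    (tpair (varOf i e) (varParam (β := Σ s, M.Dom s) i ⟨e.1.1, anchor e.1.1 e.1.2⟩))

lemma legF_realize {N M : LStructure L} {i : Finset (LAtom N)}
    (anchor : (s : L.Sorts) → N.Dom s → M.Dom s)
    (e1 : {s : L.Sorts} → N.Dom s → L.Loc s)
    (e : {e : Σ s, N.Dom s // e ∈ stageElems i}) {Nt : LStructure L}
    (val : (a : SCtx N i (Σ s, M.Dom s)) → Nt.Dom (sctxSort Sigma.fst i a)) :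
    (legForm i anchor e1 e).Realize Nt val
      ↔ Nt.locRel (e1 e.1.2) (val (SCtx.v e))
          (val (SCtx.p ⟨e.1.1, anchor e.1.1 e.1.2⟩)) := by
  show Nt.relMap _ _ ↔ _
  rw [tpair_realize]
  exact Iff.rfl

end Stage
section StageExists

attribute [local instance] Classical.propDecidable

variable {L : LocalLanguage}

noncomputable def varNone (s : L.Sorts) : LTerm L (Option Empty) (osort s (emptySorts L)) s :=
  LTerm.var (σ := osort s (emptySorts L)) none

lemma ne_transfer {T : Set (PosSentence L)} {M N₁ N₂ : LStructure L}
    (hM : IsPC M T) (hN₁ : LocalModel N₁ T) (f₁ : LHom M N₁) (f₂ : LHom M N₂)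
    {s : L.Sorts} (x : N₁.Dom s) : Nonempty (M.Dom s) ∧ Nonempty (N₂.Dom s) := by
  let ψ : PosForm L Empty (emptySorts L) :=
    PosForm.ex s (.rel (L.locToRel (L.dd0 s)) (tpair (varNone s) (varNone s)))
  have hψ₁ : ψ.Realize N₁ (fun a : Empty => f₁.toFun _ ((fun e : Empty => e.elim) a)) := by
    refine ⟨x, ?_⟩
    show N₁.relMap _ _
    rw [tpair_realize]
    have hx : N₁.locRel (L.dd0 s) x x := (hN₁.1.dd0_eq x x).mpr rfl
    exact hx
  have hψM : ψ.Realize M (fun e : Empty => e.elim) :=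
    hM.2 N₁ f₁ hN₁ Empty (emptySorts L) ψ (fun e => e.elim) hψ₁
  obtain ⟨mx, -⟩ := id hψM
  have hψ₂ := PosForm.realize_hom f₂ ψ (fun e : Empty => e.elim) hψM
  obtain ⟨y, -⟩ := hψ₂
  exact ⟨⟨mx⟩, ⟨y⟩⟩

lemma stage_exists {T : Set (PosSentence L)} {M N₁ N₂ : LStructure L}
    (hM : IsPC M T) (hN₁ : LocalModel N₁ T)
    (f₁ : LHom M N₁) (f₂ : LHom M N₂)
    (anchor : (s : L.Sorts) → N₁.Dom s → M.Dom s)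
    (e1 : {s : L.Sorts} → N₁.Dom s → L.Loc s)
    (he1 : ∀ {s : L.Sorts} (x : N₁.Dom s), N₁.locRel (e1 x) x (f₁.toFun s (anchor s x)))
    (junk : (x : Σ s, N₁.Dom s) → N₂.Dom x.1)
    (i : Finset (LAtom N₁)) :
    ∃ w : (x : Σ s, N₁.Dom s) → N₂.Dom x.1,
      (∀ A ∈ i, N₂.relMap A.R (fun k =>
         Sum.elim (fun x => w ⟨A.ρ k, x⟩) N₂.constMap (A.args k))) ∧
      (∀ x : Σ s, N₁.Dom s, x ∈ stageElems i →
         N₂.locRel (e1 x.2) (w x) (f₂.toFun x.1 (anchor x.1 x.2))) := by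
  rcases Finset.eq_empty_or_nonempty i with hi | hne
  · subst hi
    refine ⟨junk, fun A hA => absurd hA (Finset.notMem_empty A), fun x hx => ?_⟩
    exact absurd hx (by simp [stageElems])
  · obtain ⟨A₀, hA₀⟩ := hne
    set Lf : List (PosForm L (SCtx N₁ i (Σ s, M.Dom s)) (sctxSort Sigma.fst i)) :=
      (i.attach.toList.map fun A =>
        PosForm.rel A.1.R (fun k => argTerm Sigma.fst i A.1 A.2 k)) ++
      ((stageElems i).attach.toList.map fun e => legForm i anchor e1 e) with hLf
    set bigφ := Lf.foldr .and
      (PosForm.rel A₀.R (fun k => argTerm Sigma.fst i A₀ hA₀ k)) with hbig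
    obtain ⟨Φ, hΦ⟩ := exists_closure (β := Σ s, M.Dom s) (σβ := Sigma.fst)
      {e : Σ s, N₁.Dom s // e ∈ stageElems i} (fun e => e.1.1) bigφ
    have hN₁big : bigφ.Realize N₁
        (sval (fun g : {e : Σ s, N₁.Dom s // e ∈ stageElems i} => g.1.2)
          (fun p : Σ s, M.Dom s => f₁.toFun p.1 p.2)) := by
      rw [hbig, realize_foldr_and]
      refine ⟨?_, (atomF_realize A₀ hA₀ _ (fun x : Σ s, N₁.Dom s => x.2)
        (fun e he => rfl)).mpr A₀.holds⟩
      intro ψ hψ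
      rw [hLf] at hψ
      rcases List.mem_append.mp hψ with hmem | hmem
      · obtain ⟨A, -, rfl⟩ := List.mem_map.mp hmem
        exact (atomF_realize A.1 A.2 _ (fun x : Σ s, N₁.Dom s => x.2)
          (fun e he => rfl)).mpr A.1.holds
      · obtain ⟨e, -, rfl⟩ := List.mem_map.mp hmem
        exact (legF_realize anchor e1 e _).mpr (he1 e.1.2)
    have hΦN₁ : Φ.Realize N₁ (fun p : Σ s, M.Dom s => f₁.toFun p.1 p.2) :=
      (hΦ N₁ _).mpr ⟨_, hN₁big⟩
    have hΦM : Φ.Realize M (fun p : Σ s, M.Dom s => p.2) :=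
      hM.2 N₁ f₁ hN₁ _ _ Φ _ hΦN₁
    have hΦN₂ : Φ.Realize N₂ (fun p : Σ s, M.Dom s => f₂.toFun p.1 p.2) :=
      PosForm.realize_hom f₂ Φ _ hΦM
    obtain ⟨wN, hwN⟩ := (hΦ N₂ _).mp hΦN₂
    rw [hbig, realize_foldr_and] at hwN
    refine ⟨fun x => if h : x ∈ stageElems i then wN ⟨x, h⟩ else junk x, ?_, ?_⟩
    · intro A hA
      have hmem : PosForm.rel A.R (fun k => argTerm Sigma.fst i A hA k) ∈ Lf := by
        rw [hLf]
        exact List.mem_append.mpr (Or.inl (List.mem_map.mpr ⟨⟨A, hA⟩,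
          Finset.mem_toList.mpr (Finset.mem_attach _ _), rfl⟩))
      exact (atomF_realize A hA _
        (fun x : Σ s, N₁.Dom s => if h : x ∈ stageElems i then wN ⟨x, h⟩ else junk x)
        (fun e he => by
          show sval wN (fun p : Σ s, M.Dom s => f₂.toFun p.1 p.2) (SCtx.v ⟨e, he⟩)
              = dite (e ∈ stageElems i) (fun h => wN ⟨e, h⟩) (fun _ => junk e)
          exact (dif_pos he (t := fun h => wN ⟨e, h⟩) (e := fun _ => junk e)).symm)).mp
        (hwN.1 _ hmem)
    · intro x hx
      have hmem : legForm i anchor e1 ⟨x, hx⟩ ∈ Lf := by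
        rw [hLf]
        exact List.mem_append.mpr (Or.inr (List.mem_map.mpr ⟨⟨x, hx⟩,
          Finset.mem_toList.mpr (Finset.mem_attach _ _), rfl⟩))
      have hleg := (legF_realize anchor e1 ⟨x, hx⟩ _).mp (hwN.1 _ hmem)
      show N₂.locRel (e1 x.2)
          (dite (x ∈ stageElems i) (fun h => wN ⟨x, h⟩) (fun _ => junk x))
          (f₂.toFun x.1 (anchor x.1 x.2))
      rw [dif_pos hx]
      exact hleg

end StageExists
section KeyCompat

attribute [local instance] Classical.propDecidable

variable {L : LocalLanguage}

lemma realize_empty_val {Nt : LStructure L} (φ : PosForm L Empty (emptySorts L))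
    (v w : (a : Empty) → Nt.Dom (emptySorts L a)) : φ.Realize Nt v → φ.Realize Nt w := by
  intro h
  rwa [show w = v from funext fun a => a.elim]

noncomputable def locAtom {N : LStructure L} {s : L.Sorts} (d : L.Loc s) (x y : N.Dom s)
    (h : N.locRel d x y) : LAtom N where
  n := 2
  ρ := ![s, s]
  R := L.locToRel d
  args := dpair (C := fun k => N.Dom (![s,s] k) ⊕ L.Const (![s,s] k)) (Sum.inl x) (Sum.inl y)
  holds := by
    have e : (fun k => Sum.elim id N.constMap
        (dpair (C := fun k => N.Dom (![s,s] k) ⊕ L.Const (![s,s] k))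
          (Sum.inl x) (Sum.inl y) k))
        = dpair (C := fun k => N.Dom (![s,s] k)) x y := by
      funext k
      match k with
      | ⟨0, _⟩ => rfl
      | ⟨1, _⟩ => rfl
    show N.relMap (L.locToRel d) _
    rw [e]
    exact h

noncomputable def constAtom (N : LStructure L) {s : L.Sorts} (hN : IsLocal N)
    (c : L.Const s) : LAtom N where
  n := 2
  ρ := ![s, s]
  R := L.locToRel (L.dd0 s)
  args := dpair (C := fun k => N.Dom (![s,s] k) ⊕ L.Const (![s,s] k))
    (Sum.inl (N.constMap c)) (Sum.inr c)
  holds := by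
    have e : (fun k => Sum.elim id N.constMap
        (dpair (C := fun k => N.Dom (![s,s] k) ⊕ L.Const (![s,s] k))
          (Sum.inl (N.constMap c)) (Sum.inr c) k))
        = dpair (C := fun k => N.Dom (![s,s] k)) (N.constMap c) (N.constMap c) := by
      funext k
      match k with
      | ⟨0, _⟩ => rfl
      | ⟨1, _⟩ => rfl
    show N.relMap (L.locToRel (L.dd0 s)) _
    rw [e]
    exact (hN.dd0_eq _ _).mpr rfl

theorem key_compat {T : Set (PosSentence L)} {M A₁ A₂ : LStructure L} (hM : IsPC M T)
    (hc₁ : Compat T M A₁) (hc₂ : Compat T M A₂) : Compat T A₁ A₂ := by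
  classical
  obtain ⟨N₁, hN₁, ⟨f₁⟩, ⟨a₁⟩⟩ := hc₁
  obtain ⟨N₂, hN₂, ⟨f₂⟩, ⟨a₂⟩⟩ := hc₂
  -- anchors and legs
  let anchor : (s : L.Sorts) → N₁.Dom s → M.Dom s :=
    fun s x => Classical.choice (ne_transfer hM hN₁ f₁ f₂ x).1
  let junk : (x : Σ s, N₁.Dom s) → N₂.Dom x.1 :=
    fun x => Classical.choice (ne_transfer hM hN₁ f₁ f₂ x.2).2
  let e1 : {s : L.Sorts} → N₁.Dom s → L.Loc s :=
    fun {s} x => Classical.choose (hN₁.1.total x (f₁.toFun s (anchor s x)))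
  have he1 : ∀ {s : L.Sorts} (x : N₁.Dom s),
      N₁.locRel (e1 x) x (f₁.toFun s (anchor s x)) :=
    fun {s} x => Classical.choose_spec (hN₁.1.total x (f₁.toFun s (anchor s x)))
  have hanchor : ∀ {s : L.Sorts} (x x' : N₁.Dom s), anchor s x = anchor s x' :=
    fun x x' => rfl
  -- stages
  choose W hW1 hW2 using stage_exists hM hN₁ f₁ f₂ anchor e1 he1 junk
  set U := stageFilter (N := N₁) with hU
  set UP := FilPow N₂ (Finset (LAtom N₁)) U with hUP
  let h1v : (x : Σ s, N₁.Dom s) → UP.Dom x.1 :=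
    fun x => Quotient.mk (pwSetoid N₂ _ U x.1) (fun i => W i x)
  let h2v : {s : L.Sorts} → N₂.Dom s → UP.Dom s :=
    fun {s} y => Quotient.mk (pwSetoid N₂ _ U s) (fun _ => y)
  -- helper facts about W
  have hW1' : ∀ (i : Finset (LAtom N₁)) {s : L.Sorts} (d : L.Loc s) (x y : N₁.Dom s)
      (h : N₁.locRel d x y), locAtom d x y h ∈ i →
      N₂.locRel d (W i ⟨s, x⟩) (W i ⟨s, y⟩) := by
    intro i s d x y h hAi
    have h2 := hW1 i _ hAi
    have e : (fun k => Sum.elim (fun x' => W i ⟨(locAtom d x y h).ρ k, x'⟩) N₂.constMap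
        ((locAtom d x y h).args k))
        = dpair (C := fun k => N₂.Dom (![s,s] k)) (W i ⟨s, x⟩) (W i ⟨s, y⟩) := by
      funext k
      match k with
      | ⟨0, _⟩ => rfl
      | ⟨1, _⟩ => rfl
    rw [e] at h2
    exact h2
  have hW1c : ∀ (i : Finset (LAtom N₁)) {s : L.Sorts} (c : L.Const s),
      constAtom N₁ hN₁.1 c ∈ i → W i ⟨s, N₁.constMap c⟩ = N₂.constMap c := by
    intro i s c hAi
    have h2 := hW1 i _ hAi
    have e : (fun k => Sum.elim (fun x' => W i ⟨(constAtom N₁ hN₁.1 c).ρ k, x'⟩) N₂.constMap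
        ((constAtom N₁ hN₁.1 c).args k))
        = dpair (C := fun k => N₂.Dom (![s,s] k)) (W i ⟨s, N₁.constMap c⟩) (N₂.constMap c) := by
      funext k
      match k with
      | ⟨0, _⟩ => rfl
      | ⟨1, _⟩ => rfl
    rw [e] at h2
    exact (hN₂.1.dd0_eq _ _).mp h2
  have hmemSE : ∀ (i : Finset (LAtom N₁)) {s : L.Sorts} (x : N₁.Dom s)
      (h : N₁.locRel (L.dd0 s) x x), locAtom (L.dd0 s) x x h ∈ i →
      (⟨s, x⟩ : Σ s, N₁.Dom s) ∈ stageElems i := by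
    intro i s x h hAi
    exact mem_stageElems hAi (k := (0 : Fin 2)) rfl
  -- the substructure
  let C : Substruct UP :=
    { carrier := fun s => {q | (∃ x : N₁.Dom s, q = h1v ⟨s, x⟩) ∨ ∃ y : N₂.Dom s, q = h2v y},
      const_mem := fun {s} c => Or.inr ⟨N₂.constMap c, rfl⟩ }
  let Q := C.toStruct
  -- UP-level locality helpers
  have upSymm : ∀ {s : L.Sorts} (d : L.Loc s) (p q : UP.Dom s),
      UP.locRel d p q → UP.locRel d q p := by
    intro s d p q h
    obtain ⟨F, G, hF, hG, hs⟩ := filpow_locRel_elim h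
    rw [← hF, ← hG]
    exact filpow_locRel_intro d G F
      (Filter.mem_of_superset hs fun i hi => hN₂.1.symm _ _ _ hi)
  have Qloc : ∀ {s : L.Sorts} (d : L.Loc s) (a b : Q.Dom s),
      Q.locRel d a b ↔ UP.locRel d a.1 b.1 := by
    intro s d a b
    show UP.relMap (L.locToRel d)
        (fun k => (dpair (C := fun k => Q.Dom (![s,s] k)) a b k).1)
      ↔ UP.relMap (L.locToRel d) (dpair (C := fun k => UP.Dom (![s,s] k)) a.1 b.1)
    rw [show (fun k => (dpair (C := fun k => Q.Dom (![s,s] k)) a b k).1)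
        = dpair (C := fun k => UP.Dom (![s,s] k)) a.1 b.1 from by
      funext k
      match k with
      | ⟨0, _⟩ => rfl
      | ⟨1, _⟩ => rfl]
  -- Q is local
  have hQlocal : IsLocal Q := by
    refine ⟨?_, ?_, ?_, ?_, ?_, ?_⟩
    · -- symm
      intro s d a b h
      exact (Qloc d b a).mpr (upSymm d a.1 b.1 ((Qloc d a b).mp h))
    · -- mono
      intro s d₁ d₂ hle a b h
      obtain ⟨F, G, hF, hG, hs⟩ := filpow_locRel_elim ((Qloc d₁ a b).mp h)
      refine (Qloc d₂ a b).mpr ?_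
      rw [← hF, ← hG]
      exact filpow_locRel_intro d₂ F G
        (Filter.mem_of_superset hs fun i hi => hN₂.1.mono _ _ hle _ _ hi)
    · -- comp
      intro s d₁ d₂ a b c h1 h2
      obtain ⟨F, G, hF, hG, hs⟩ := filpow_locRel_elim ((Qloc d₁ a b).mp h1)
      obtain ⟨F', G', hF', hG', hs'⟩ := filpow_locRel_elim ((Qloc d₂ b c).mp h2)
      have heq : {i | G i = F' i} ∈ U := Quotient.exact (hG.trans hF'.symm)
      refine (Qloc _ a c).mpr ?_
      rw [← hF, ← hG']
      refine filpow_locRel_intro _ F G' ?_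
      refine Filter.mem_of_superset
        (Filter.inter_mem hs (Filter.inter_mem hs' heq)) ?_
      rintro i ⟨hi1, hi2, hi3⟩
      exact hN₂.1.comp _ _ _ _ _ hi1 (by rw [hi3]; exact hi2)
    · -- boundAx
      intro s c₁ c₂
      refine (Qloc _ _ _).mpr ?_
      exact filpow_locRel_intro _ (fun _ => N₂.constMap c₁) (fun _ => N₂.constMap c₂)
        (Filter.univ_mem' fun i => hN₂.1.boundAx c₁ c₂)
    · -- total
      intro s a b
      rcases a.2 with ⟨x, hx⟩ | ⟨y, hy⟩ <;> rcases b.2 with ⟨x', hx'⟩ | ⟨y', hy'⟩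
      · -- both from N₁
        have hsx : N₁.locRel (L.dd0 s) x x := (hN₁.1.dd0_eq x x).mpr rfl
        have hsx' : N₁.locRel (L.dd0 s) x' x' := (hN₁.1.dd0_eq x' x').mpr rfl
        refine ⟨L.locMul (e1 x) (e1 x'), (Qloc _ a b).mpr ?_⟩
        rw [hx, hx']
        refine filpow_locRel_intro _ (fun i => W i ⟨s, x⟩) (fun i => W i ⟨s, x'⟩) ?_
        refine Filter.mem_of_superset
          (stageFilter_up ({locAtom (L.dd0 s) x x hsx, locAtom (L.dd0 s) x' x' hsx'})) ?_
        intro i hi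
        have l1 := hW2 i ⟨s, x⟩ (hmemSE i x hsx (hi (Finset.mem_insert_self _ _)))
        have l2 := hW2 i ⟨s, x'⟩ (hmemSE i x' hsx'
          (hi (Finset.mem_insert_of_mem (Finset.mem_singleton_self _))))
        have l2' := hN₂.1.symm _ _ _ l2
        have : anchor s x' = anchor s x := hanchor x' x
        rw [this] at l2'
        exact hN₂.1.comp _ _ _ _ _ l1 l2'
      · -- N₁ and N₂
        have hsx : N₁.locRel (L.dd0 s) x x := (hN₁.1.dd0_eq x x).mpr rfl
        obtain ⟨ey, hey⟩ := hN₂.1.total (f₂.toFun s (anchor s x)) y'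
        refine ⟨L.locMul (e1 x) ey, (Qloc _ a b).mpr ?_⟩
        rw [hx, hy']
        refine filpow_locRel_intro _ (fun i => W i ⟨s, x⟩) (fun _ => y') ?_
        refine Filter.mem_of_superset
          (stageFilter_up ({locAtom (L.dd0 s) x x hsx})) ?_
        intro i hi
        have l1 := hW2 i ⟨s, x⟩ (hmemSE i x hsx (hi (Finset.mem_singleton_self _)))
        exact hN₂.1.comp _ _ _ _ _ l1 hey
      · -- N₂ and N₁
        have hsx : N₁.locRel (L.dd0 s) x' x' := (hN₁.1.dd0_eq x' x').mpr rfl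
        obtain ⟨ey, hey⟩ := hN₂.1.total (f₂.toFun s (anchor s x')) y
        refine ⟨L.locMul (e1 x') ey, (Qloc _ a b).mpr ?_⟩
        refine upSymm _ _ _ ?_
        rw [hx', hy]
        refine filpow_locRel_intro _ (fun i => W i ⟨s, x'⟩) (fun _ => y) ?_
        refine Filter.mem_of_superset
          (stageFilter_up ({locAtom (L.dd0 s) x' x' hsx})) ?_
        intro i hi
        have l1 := hW2 i ⟨s, x'⟩ (hmemSE i x' hsx (hi (Finset.mem_singleton_self _)))
        exact hN₂.1.comp _ _ _ _ _ l1 hey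
      · -- both from N₂
        obtain ⟨ey, hey⟩ := hN₂.1.total y y'
        refine ⟨ey, (Qloc _ a b).mpr ?_⟩
        rw [hy, hy']
        exact filpow_locRel_intro _ (fun _ => y) (fun _ => y')
          (Filter.univ_mem' fun i => hey)
    · -- dd0_eq
      intro s a b
      constructor
      · intro h
        obtain ⟨F, G, hF, hG, hs⟩ := filpow_locRel_elim ((Qloc _ a b).mp h)
        have hFG : {i | F i = G i} ∈ U :=
          Filter.mem_of_superset hs (fun i hi => (hN₂.1.dd0_eq _ _).mp hi)
        have : a.1 = b.1 := by
          rw [← hF, ← hG]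
          exact Quotient.sound hFG
        exact Subtype.ext this
      · rintro rfl
        obtain ⟨f, hf⟩ := Quotient.exists_rep a.1
        refine (Qloc _ a a).mpr ?_
        rw [← hf]
        exact filpow_locRel_intro _ f f
          (Filter.univ_mem' fun i => (hN₂.1.dd0_eq _ _).mpr rfl)
  -- Q models T
  let inc : LHom Q UP :=
    { toFun := fun s x => x.1, map_rel := fun R x h => h, map_const := fun c => rfl }
  have hQT : ∀ φ ∈ T, ¬ φ.RealizedIn Q := by
    intro φ hφ hreal
    have h1 : φ.Realize UP (fun a : Empty => inc.toFun _ ((fun e : Empty => e.elim) a)) :=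
      PosForm.realize_hom inc φ _ hreal
    have h2 := filpow_los φ _ (fun a : Empty => a.elim) (fun a => a.elim) h1
    obtain ⟨i, hi⟩ := stageFilter_nonempty h2
    exact hN₂.2 φ hφ (realize_empty_val φ _ _ hi)
  -- homomorphisms into Q
  let qh₁ : LHom N₁ Q :=
    { toFun := fun s x => ⟨h1v ⟨s, x⟩, Or.inl ⟨x, rfl⟩⟩,
      map_rel := by
        intro n ρ R xs h
        show UP.relMap R _
        refine ⟨fun k => fun i => W i ⟨ρ k, xs k⟩, fun k => rfl, ?_⟩
        let A : LAtom N₁ := ⟨n, ρ, R, fun k => Sum.inl (xs k), h⟩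
        refine Filter.mem_of_superset (stageFilter_up {A}) ?_
        intro i hi
        exact hW1 i A (hi (Finset.mem_singleton_self A)),
      map_const := by
        intro s c
        apply Subtype.ext
        show h1v ⟨s, N₁.constMap c⟩ = UP.constMap c
        apply Quotient.sound
        show {i | W i ⟨s, N₁.constMap c⟩ = N₂.constMap c} ∈ U
        refine Filter.mem_of_superset (stageFilter_up {constAtom N₁ hN₁.1 c}) ?_
        intro i hi
        exact hW1c i c (hi (Finset.mem_singleton_self _)) }
  let qh₂ : LHom N₂ Q :=
    { toFun := fun s y => ⟨h2v y, Or.inr ⟨y, rfl⟩⟩,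
      map_rel := by
        intro n ρ R xs h
        show UP.relMap R _
        exact ⟨fun k => fun _ => xs k, fun k => rfl, Filter.univ_mem' fun i => h⟩,
      map_const := fun c => rfl }
  exact ⟨Q, ⟨hQlocal, hQT⟩, ⟨qh₁.comp a₁⟩, ⟨qh₂.comp a₂⟩⟩

end KeyCompat
/-- For a local positively closed model `M` of `T`, any two members of
`Com(M)` are compatible; in particular, compatibility is an equivalence relation on the
class of local positively closed models of `T` (and `Com^pc(M)` is the class of `M`). -/
theorem compat_is_equivalence_on_pc
    {L : LocalLanguage} (T : Set (PosSentence L))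
    (hT : IsNegLocalTheory T) (hsat : LocSat T) :
    (∀ M : LStructure L, IsPC M T →
      ∀ A₁ A₂ : LStructure L, LocalModel A₁ T → LocalModel A₂ T →
        Compat T M A₁ → Compat T M A₂ → Compat T A₁ A₂) ∧
    (∀ M : LStructure L, IsPC M T → Compat T M M) ∧
    (∀ M N : LStructure L, IsPC M T → IsPC N T → Compat T M N → Compat T N M) ∧
    (∀ M N P : LStructure L, IsPC M T → IsPC N T → IsPC P T →
      Compat T M N → Compat T N P → Compat T M P) := by
  refine ⟨fun M hM A₁ A₂ _ _ h1 h2 => key_compat hM h1 h2, ?_, ?_, ?_⟩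
  · intro M hM
    exact ⟨M, hM.1, ⟨LHom.id M⟩, ⟨LHom.id M⟩⟩
  · rintro M N _ _ ⟨P, hP, hm, hn⟩
    exact ⟨P, hP, hn, hm⟩
  · intro M N P _ hN _ h1 h2
    have h1' : Compat T N M := by
      obtain ⟨Q', hQ, u, v⟩ := h1
      exact ⟨Q', hQ, v, u⟩
    exact key_compat hN h1' h2
end
end

section
/- Let T be a locally satisfiable negative local theory and C a retractor of T. Then every ball d(a) of C is compact in the local positive logic topology. -/
noncomputable section

/-! ## Auxiliary: bounded ultrapower along an ultrafilter on a ball -/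

section BddUltrapower

variable {L : LocalLanguage} (C : LStructure L) (hC : IsLocal C) {s : L.Sorts}
  (U : Ultrafilter (C.Dom s))

/-- Functions from the index sort that are bounded (almost everywhere) around a point. -/
def Bdd (s' : L.Sorts) : Type :=
  {f : C.Dom s → C.Dom s' // ∃ (d' : L.Loc s') (c : C.Dom s'),
    {z | C.locRel d' (f z) c} ∈ U}

/-- Almost-everywhere equality. -/
def bsetoid (s' : L.Sorts) : Setoid (Bdd C U s') where
  r f g := {z | f.1 z = g.1 z} ∈ U
  iseqv := by
    refine ⟨fun f => ?_, fun {f g} h => ?_, fun {f g h} h1 h2 => ?_⟩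
    · exact Filter.univ_mem' fun z => rfl
    · exact Filter.mem_of_superset h fun z hz => hz.symm
    · exact Filter.mem_of_superset (Filter.inter_mem h1 h2) fun z hz => hz.1.trans hz.2

/-- Constant bounded function. -/
def constBdd {s' : L.Sorts} (c : C.Dom s') : Bdd C U s' :=
  ⟨fun _ => c, L.dd0 s', c, Filter.univ_mem' fun z => (hC.dd0_eq c c).mpr rfl⟩

/-- The bounded ultrapower structure. -/
def UP : LStructure L where
  Dom s' := Quotient (bsetoid C U s')
  relMap {n ρ} R x := {z | C.relMap R (fun i => ((x i).out).1 z)} ∈ U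
  constMap {s'} c := Quotient.mk (bsetoid C U s') (constBdd C hC U (C.constMap c))

lemma UP_rel_iff {n : ℕ} {ρ : Fin n → L.Sorts} (R : L.Rel n ρ)
    (x : (i : Fin n) → (UP C hC U).Dom (ρ i)) (r : (i : Fin n) → Bdd C U (ρ i))
    (hr : ∀ i, Quotient.mk (bsetoid C U (ρ i)) (r i) = x i) :
    (UP C hC U).relMap R x ↔ {z | C.relMap R (fun i => (r i).1 z)} ∈ U := by
  have hae : ∀ i, {z | ((x i).out).1 z = (r i).1 z} ∈ U := by
    intro i
    have h : Quotient.mk (bsetoid C U (ρ i)) ((x i).out)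
        = Quotient.mk (bsetoid C U (ρ i)) (r i) := by
      exact (Quotient.out_eq (x i)).trans (hr i).symm
    exact Quotient.exact h
  have hall : (⋂ i, {z | ((x i).out).1 z = (r i).1 z}) ∈ U := Filter.iInter_mem.mpr hae
  constructor
  · intro h
    refine Filter.mem_of_superset (Filter.inter_mem hall h) ?_
    rintro z ⟨hz1, hz2⟩
    show C.relMap R _
    have he : (fun i => (r i).1 z) = (fun i => ((x i).out).1 z) :=
      funext fun i => (Set.mem_iInter.mp hz1 i).symm
    rw [he]; exact hz2
  · intro h
    refine Filter.mem_of_superset (Filter.inter_mem hall h) ?_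
    rintro z ⟨hz1, hz2⟩
    show C.relMap R _
    have he : (fun i => ((x i).out).1 z) = (fun i => (r i).1 z) :=
      funext fun i => Set.mem_iInter.mp hz1 i
    rw [he]; exact hz2

lemma UP_locRel_iff {s' : L.Sorts} (d : L.Loc s') (x y : (UP C hC U).Dom s')
    (f g : Bdd C U s') (hf : Quotient.mk (bsetoid C U s') f = x)
    (hg : Quotient.mk (bsetoid C U s') g = y) :
    (UP C hC U).locRel d x y ↔ {z | C.locRel d (f.1 z) (g.1 z)} ∈ U := by
  have hr : ∀ i : Fin 2,
      Quotient.mk (bsetoid C U (![s', s'] i))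
        ((dpair f g : (i : Fin 2) → Bdd C U (![s', s'] i)) i)
        = (dpair x y : (i : Fin 2) → (UP C hC U).Dom (![s', s'] i)) i := by
    intro i
    match i with
    | ⟨0, _⟩ => exact hf
    | ⟨1, _⟩ => exact hg
  have h := UP_rel_iff C hC U (L.locToRel d) (dpair x y) (dpair f g) hr
  have hset : {z | C.relMap (L.locToRel d)
      (fun i => ((dpair f g : (i : Fin 2) → Bdd C U (![s', s'] i)) i).1 z)}
      = {z | C.locRel d (f.1 z) (g.1 z)} := by
    ext z
    show C.relMap _ _ ↔ C.relMap _ _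
    have he : (fun i => ((dpair f g : (i : Fin 2) → Bdd C U (![s', s'] i)) i).1 z)
        = (dpair (f.1 z) (g.1 z) : (i : Fin 2) → C.Dom (![s', s'] i)) := by
      funext i
      match i with
      | ⟨0, _⟩ => rfl
      | ⟨1, _⟩ => rfl
    rw [he]
  rw [hset] at h
  exact h

lemma UP_isLocal : IsLocal (UP C hC U) := by
  constructor
  · -- symm
    intro s' d x y h
    rw [UP_locRel_iff C hC U d x y x.out y.out (Quotient.out_eq _) (Quotient.out_eq _)] at h
    rw [UP_locRel_iff C hC U d y x y.out x.out (Quotient.out_eq _) (Quotient.out_eq _)]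
    exact Filter.mem_of_superset h fun z hz => hC.symm _ _ _ hz
  · -- mono
    intro s' d₁ d₂ hle x y h
    rw [UP_locRel_iff C hC U d₁ x y x.out y.out (Quotient.out_eq _) (Quotient.out_eq _)] at h
    rw [UP_locRel_iff C hC U d₂ x y x.out y.out (Quotient.out_eq _) (Quotient.out_eq _)]
    exact Filter.mem_of_superset h fun z hz => hC.mono _ _ hle _ _ hz
  · -- comp
    intro s' d₁ d₂ x y w h1 h2
    rw [UP_locRel_iff C hC U d₁ x y x.out y.out (Quotient.out_eq _) (Quotient.out_eq _)] at h1
    rw [UP_locRel_iff C hC U d₂ y w y.out w.out (Quotient.out_eq _) (Quotient.out_eq _)] at h2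
    rw [UP_locRel_iff C hC U _ x w x.out w.out (Quotient.out_eq _) (Quotient.out_eq _)]
    exact Filter.mem_of_superset (Filter.inter_mem h1 h2)
      fun z hz => hC.comp _ _ _ _ _ hz.1 hz.2
  · -- boundAx
    intro s' c₁ c₂
    exact (UP_locRel_iff C hC U _ ((UP C hC U).constMap c₁) ((UP C hC U).constMap c₂)
      (constBdd C hC U (C.constMap c₁)) (constBdd C hC U (C.constMap c₂)) rfl rfl).mpr
      (Filter.univ_mem' fun z => hC.boundAx c₁ c₂)
  · -- total
    intro s' x y
    obtain ⟨d₁, c₁, h₁⟩ := x.out.2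
    obtain ⟨d₂, c₂, h₂⟩ := y.out.2
    obtain ⟨e, he⟩ := hC.total c₁ c₂
    refine ⟨L.locMul (L.locMul d₁ e) d₂, ?_⟩
    rw [UP_locRel_iff C hC U _ x y x.out y.out (Quotient.out_eq _) (Quotient.out_eq _)]
    refine Filter.mem_of_superset (Filter.inter_mem h₁ h₂) ?_
    rintro z ⟨hz1, hz2⟩
    exact hC.comp _ _ _ _ _ (hC.comp _ _ _ _ _ hz1 he) (hC.symm _ _ _ hz2)
  · -- dd0_eq
    intro s' x y
    rw [UP_locRel_iff C hC U _ x y x.out y.out (Quotient.out_eq _) (Quotient.out_eq _)]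
    constructor
    · intro h
      have hxy : {z | x.out.1 z = y.out.1 z} ∈ U :=
        Filter.mem_of_superset h fun z hz => (hC.dd0_eq _ _).mp hz
      exact (Quotient.out_eq x).symm.trans ((Quotient.sound hxy).trans (Quotient.out_eq y))
    · rintro rfl
      exact Filter.univ_mem' fun z => (hC.dd0_eq _ _).mpr rfl

/-- Representative of a term value. -/
def termRep {α : Type} {σ : α → L.Sorts} (r : (a : α) → Bdd C U (σ a)) :
    {s' : L.Sorts} → LTerm L α σ s' → Bdd C U s'
  | _, .var a => r a
  | _, .const c => constBdd C hC U (C.constMap c)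

lemma termRep_val {α : Type} {σ : α → L.Sorts} (r : (a : α) → Bdd C U (σ a))
    {s' : L.Sorts} (t : LTerm L α σ s') (z : C.Dom s) :
    (termRep C hC U r t).1 z = t.realize C (fun a => (r a).1 z) := by
  cases t <;> rfl

lemma termRep_mk {α : Type} {σ : α → L.Sorts} (r : (a : α) → Bdd C U (σ a))
    (v : (a : α) → (UP C hC U).Dom (σ a))
    (hr : ∀ a, Quotient.mk (bsetoid C U (σ a)) (r a) = v a)
    {s' : L.Sorts} (t : LTerm L α σ s') :
    Quotient.mk (bsetoid C U s') (termRep C hC U r t) = t.realize (UP C hC U) v := by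
  cases t
  · exact hr _
  · rfl

/-- Extending representatives by one. -/
def ocons {α : Type} {σ : α → L.Sorts} {s'' : L.Sorts} (b : Bdd C U s'')
    (r : (a : α) → Bdd C U (σ a)) : (o : Option α) → Bdd C U (osort s'' σ o)
  | none => b
  | some a => r a

/-- Forward Łoś theorem for positive formulas. -/
theorem los_pos {α : Type} {σ : α → L.Sorts} (φ : PosForm L α σ) :
    ∀ (v : (a : α) → (UP C hC U).Dom (σ a)) (r : (a : α) → Bdd C U (σ a)),
      (∀ a, Quotient.mk (bsetoid C U (σ a)) (r a) = v a) →
      φ.Realize (UP C hC U) v → {z | φ.Realize C (fun a => (r a).1 z)} ∈ U := by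
  induction φ with
  | rel R ts =>
    intro v r hr h
    have h' := (UP_rel_iff C hC U R _ (fun i => termRep C hC U r (ts i))
      (fun i => termRep_mk C hC U r v hr (ts i))).mp h
    refine Filter.mem_of_superset h' ?_
    intro z hz
    show C.relMap R _
    have he : (fun i => (ts i).realize C (fun a => (r a).1 z))
        = (fun i => (termRep C hC U r (ts i)).1 z) :=
      funext fun i => (termRep_val C hC U r (ts i) z).symm
    rw [he]; exact hz
  | and φ ψ ihφ ihψ =>
    intro v r hr h
    exact Filter.mem_of_superset (Filter.inter_mem (ihφ v r hr h.1) (ihψ v r hr h.2))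
      fun z hz => ⟨hz.1, hz.2⟩
  | or φ ψ ihφ ihψ =>
    intro v r hr h
    rcases h with h | h
    · exact Filter.mem_of_superset (ihφ v r hr h) fun z hz => Or.inl hz
    · exact Filter.mem_of_superset (ihψ v r hr h) fun z hz => Or.inr hz
  | ex s'' φ ih =>
    intro v r hr h
    obtain ⟨x, hx⟩ := h
    have hr' : ∀ o, Quotient.mk (bsetoid C U _) (ocons C U x.out r o) = vcons x v o := by
      intro o
      cases o
      · exact Quotient.out_eq x
      · exact hr _
    have hmem := ih (vcons x v) (ocons C U x.out r) hr' hx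
    refine Filter.mem_of_superset hmem ?_
    intro z hz
    refine ⟨x.out.1 z, ?_⟩
    have he : vcons (x.out.1 z) (fun a => (r a).1 z)
        = fun o => (ocons C U x.out r o).1 z := by
      funext o; cases o <;> rfl
    rw [he]; exact hz

/-- The bounded ultrapower is a local model of `T`. -/
theorem UP_localModel (T : Set (PosSentence L)) (hM : LocalModel C T) :
    LocalModel (UP C hC U) T := by
  refine ⟨UP_isLocal C hC U, ?_⟩
  intro φ hφ h
  have hmem := los_pos C hC U φ (fun e => e.elim) (fun e => e.elim) (fun e => e.elim) h
  obtain ⟨z, hz⟩ := Filter.nonempty_of_mem (Ultrafilter.mem_coe.mpr hmem)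
  refine hM.2 φ hφ ?_
  unfold PosSentence.RealizedIn
  have he : (fun e : Empty => (e.elim : C.Dom (emptySorts L e)))
      = (fun a : Empty => ((fun e : Empty => (e.elim : Bdd C U (emptySorts L e))) a).1 z) :=
    funext fun e => e.elim
  rw [he]
  exact hz

/-- The diagonal homomorphism into the bounded ultrapower. -/
def diag : LHom C (UP C hC U) where
  toFun s' c := Quotient.mk (bsetoid C U s') (constBdd C hC U c)
  map_rel R x h := by
    rw [UP_rel_iff C hC U R _ (fun i => constBdd C hC U (x i)) (fun i => rfl)]
    exact Filter.univ_mem' fun z => h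
  map_const c := rfl

/-- Converse Łoś theorem for local positive formulas. -/
theorem los_lpos {α : Type} {σ : α → L.Sorts} (φ : LPosForm L α σ) :
    ∀ (v : (a : α) → (UP C hC U).Dom (σ a)) (r : (a : α) → Bdd C U (σ a)),
      (∀ a, Quotient.mk (bsetoid C U (σ a)) (r a) = v a) →
      {z | φ.Realize C (fun a => (r a).1 z)} ∈ U → φ.Realize (UP C hC U) v := by
  induction φ with
  | rel R ts =>
    intro v r hr h
    refine (UP_rel_iff C hC U R _ (fun i => termRep C hC U r (ts i))
      (fun i => termRep_mk C hC U r v hr (ts i))).mpr ?_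
    refine Filter.mem_of_superset h ?_
    intro z hz
    show C.relMap R _
    have he : (fun i => (termRep C hC U r (ts i)).1 z)
        = (fun i => (ts i).realize C (fun a => (r a).1 z)) :=
      funext fun i => termRep_val C hC U r (ts i) z
    rw [he]; exact hz
  | and φ ψ ihφ ihψ =>
    intro v r hr h
    exact ⟨ihφ v r hr (Filter.mem_of_superset h fun z hz => hz.1),
      ihψ v r hr (Filter.mem_of_superset h fun z hz => hz.2)⟩
  | or φ ψ ihφ ihψ =>
    intro v r hr h
    have hu : ({z | φ.Realize C (fun a => (r a).1 z)}
        ∪ {z | ψ.Realize C (fun a => (r a).1 z)}) ∈ U :=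
      Filter.mem_of_superset h fun z hz => hz
    rcases Ultrafilter.union_mem_iff.mp hu with h' | h'
    · exact Or.inl (ihφ v r hr h')
    · exact Or.inr (ihψ v r hr h')
  | lex s'' d t φ ih =>
    intro v r hr h
    classical
    obtain ⟨d', c', hb⟩ := (termRep C hC U r t).2
    let w : C.Dom s → C.Dom s'' := fun z =>
      if hz : ∃ x, C.locRel d x (t.realize C (fun a => (r a).1 z)) ∧
          φ.Realize C (vcons x (fun a => (r a).1 z)) then hz.choose
      else (termRep C hC U r t).1 z
    have hwS : ∀ z, (∃ x, C.locRel d x (t.realize C (fun a => (r a).1 z)) ∧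
        φ.Realize C (vcons x (fun a => (r a).1 z))) →
        C.locRel d (w z) (t.realize C (fun a => (r a).1 z)) ∧
          φ.Realize C (vcons (w z) (fun a => (r a).1 z)) := by
      intro z hz
      have hwz : w z = hz.choose := dif_pos hz
      rw [hwz]
      exact hz.choose_spec
    have hwb : {z | C.locRel (L.locMul d d') (w z) c'} ∈ U := by
      refine Filter.mem_of_superset (Filter.inter_mem h hb) ?_
      rintro z ⟨hz1, hz2⟩
      have h1 := (hwS z hz1).1
      rw [← termRep_val C hC U r t z] at h1
      exact hC.comp _ _ _ _ _ h1 hz2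
    have hmemS : {z | ∃ x, C.locRel d x (t.realize C (fun a => (r a).1 z)) ∧
        φ.Realize C (vcons x (fun a => (r a).1 z))} ∈ U := h
    refine ⟨Quotient.mk (bsetoid C U s'') ⟨w, L.locMul d d', c', hwb⟩, ?_, ?_⟩
    · rw [UP_locRel_iff C hC U d _ _ ⟨w, L.locMul d d', c', hwb⟩
        (termRep C hC U r t) rfl (termRep_mk C hC U r v hr t)]
      refine Filter.mem_of_superset hmemS ?_
      intro z hz
      have h1 := (hwS z hz).1
      rwa [← termRep_val C hC U r t z] at h1
    · refine ih (vcons (Quotient.mk (bsetoid C U s'') ⟨w, L.locMul d d', c', hwb⟩) v)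
        (ocons C U ⟨w, L.locMul d d', c', hwb⟩ r) ?_ ?_
      · intro o
        cases o
        · rfl
        · exact hr _
      · refine Filter.mem_of_superset hmemS ?_
        intro z hz
        have h2 := (hwS z hz).2
        have he : (fun o => (ocons C U ⟨w, L.locMul d d', c', hwb⟩ r o).1 z)
            = vcons (w z) (fun a => (r a).1 z) := by
          funext o; cases o <;> rfl
        show φ.Realize C _
        rw [he]
        exact h2

end BddUltrapower

lemma term_hom {L : LocalLanguage} {M N : LStructure L} (g : LHom M N)
    {α : Type} {σ : α → L.Sorts} (v : (a : α) → M.Dom (σ a))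
    {s' : L.Sorts} (t : LTerm L α σ s') :
    g.toFun s' (t.realize M v) = t.realize N (fun a => g.toFun (σ a) (v a)) := by
  cases t
  · rfl
  · exact g.map_const _

/-- Homomorphisms preserve local positive formulas. -/
theorem hom_lpos {L : LocalLanguage} {M N : LStructure L} (g : LHom M N)
    {α : Type} {σ : α → L.Sorts} (φ : LPosForm L α σ) :
    ∀ v : (a : α) → M.Dom (σ a),
      φ.Realize M v → φ.Realize N (fun a => g.toFun (σ a) (v a)) := by
  induction φ with
  | rel R ts =>
    intro v h
    have h' := g.map_rel R _ h
    have he : (fun i => g.toFun _ ((ts i).realize M v))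
        = fun i => (ts i).realize N (fun a => g.toFun _ (v a)) :=
      funext fun i => term_hom g v (ts i)
    show N.relMap R _
    rw [← he]; exact h'
  | and φ ψ ihφ ihψ =>
    intro v h
    exact ⟨ihφ v h.1, ihψ v h.2⟩
  | or φ ψ ihφ ihψ =>
    intro v h
    rcases h with h | h
    · exact Or.inl (ihφ v h)
    · exact Or.inr (ihψ v h)
  | lex s'' d t φ ih =>
    intro v h
    obtain ⟨x, hx1, hx2⟩ := h
    refine ⟨g.toFun s'' x, ?_, ?_⟩
    · have h' := g.map_rel (L.locToRel d)
        (dpair x (t.realize M v) : (i : Fin 2) → M.Dom (![s'', s''] i)) hx1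
      show N.relMap _ _
      have he : (fun i => g.toFun _
          ((dpair x (t.realize M v) : (i : Fin 2) → M.Dom (![s'', s''] i)) i))
          = (dpair (g.toFun s'' x) (t.realize N (fun a => g.toFun _ (v a)))
            : (i : Fin 2) → N.Dom (![s'', s''] i)) := by
        funext i
        match i with
        | ⟨0, _⟩ => rfl
        | ⟨1, _⟩ => exact term_hom g v t
      rw [← he]; exact h'
    · have h' := ih (vcons x v) hx2
      have he : (fun o => g.toFun _ (vcons x v o))
          = vcons (g.toFun s'' x) (fun a => g.toFun _ (v a)) := by
        funext o; cases o <;> rfl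
      rw [he] at h'
      exact h'

/-- Every ball of a retractor of `T` is compact in the local positive
logic topology. -/
theorem balls_of_retractor_compact
    {L : LocalLanguage} (T : Set (PosSentence L))
    (hT : IsNegLocalTheory T) (hsat : LocSat T)
    (C : LStructure L) (hC : IsRetractor T C) :
    ∀ (s : L.Sorts) (d : L.Loc s) (a : C.Dom s),
      @IsCompact _ (lpTopologyS C s) (C.ball d a) := by
  intro s d a
  have hCloc : IsLocal C := hC.1.1
  letI : TopologicalSpace (C.Dom s) := lpTopologyS C s
  rw [isCompact_iff_ultrafilter_le_nhds]
  intro U hU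
  have hball : C.ball d a ∈ U := Filter.le_principal_iff.mp hU
  have hUPlm : LocalModel (UP C hCloc U) T := UP_localModel C hCloc U T hC.1
  obtain ⟨g, hg⟩ := hC.2 (UP C hCloc U) hUPlm (diag C hCloc U)
  have hgf : ∀ (s' : L.Sorts) (y : C.Dom s'),
      g.toFun s' ((diag C hCloc U).toFun s' y) = y := by
    intro s' y
    have h := congrArg LHom.toFun hg
    exact congrFun (congrFun h s') y
  have hidb : {z | C.locRel d z a} ∈ U :=
    Filter.mem_of_superset hball fun z hz => hCloc.symm _ _ _ hz
  let idb : Bdd C U s := ⟨fun z => z, d, a, hidb⟩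
  let b : (UP C hCloc U).Dom s := Quotient.mk (bsetoid C U s) idb
  let x : C.Dom s := g.toFun s b
  have hab : (UP C hCloc U).locRel d ((diag C hCloc U).toFun s a) b :=
    (UP_locRel_iff C hCloc U d ((diag C hCloc U).toFun s a) b
      (constBdd C hCloc U a) idb rfl rfl).mpr hball
  have hxball : x ∈ C.ball d a := by
    have h2 := g.map_rel (L.locToRel d)
      (dpair ((diag C hCloc U).toFun s a) b
        : (i : Fin 2) → (UP C hCloc U).Dom (![s, s] i)) hab
    show C.relMap _ _
    have he : (fun i => g.toFun _
        ((dpair ((diag C hCloc U).toFun s a) b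
          : (i : Fin 2) → (UP C hCloc U).Dom (![s, s] i)) i))
        = (dpair a x : (i : Fin 2) → C.Dom (![s, s] i)) := by
      funext i
      match i with
      | ⟨0, _⟩ => exact hgf s a
      | ⟨1, _⟩ => rfl
    rw [← he]; exact h2
  refine ⟨x, hxball, ?_⟩
  rw [le_nhds_iff]
  intro O hxO hO
  have hgen : TopologicalSpace.GenerateOpen
      {V | ∃ φ : LPosForm L (Unit ⊕ Σ s' : L.Sorts, C.Dom s')
            (Sum.elim (fun _ => s) (fun p => p.1)),
        V = {y | ¬ LPosForm.Realize C φ (sval (fun _ => y) (fun p => p.2))}} O := hO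
  clear hO
  induction hgen with
  | basic O hOb =>
    obtain ⟨φ, rfl⟩ := hOb
    by_contra hnot
    have hcompl : {y | ¬ LPosForm.Realize C φ (sval (fun _ => y) (fun p => p.2))}ᶜ ∈ U :=
      Ultrafilter.compl_mem_iff_notMem.mpr hnot
    have hpos : {y | LPosForm.Realize C φ (sval (fun _ => y) (fun p => p.2))} ∈ U := by
      have hseteq : {y | ¬ LPosForm.Realize C φ (sval (fun _ => y) (fun p => p.2))}ᶜ
          = {y | LPosForm.Realize C φ (sval (fun _ => y) (fun p => p.2))} := by
        ext y
        simp [Set.mem_compl_iff, not_not]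
      rwa [hseteq] at hcompl
    let r : (o : Unit ⊕ Σ s' : L.Sorts, C.Dom s') →
        Bdd C U (Sum.elim (fun _ => s) (fun p => p.1) o) :=
      fun o => match o with
        | .inl _ => idb
        | .inr p => constBdd C hCloc U p.2
    have hset : {z | LPosForm.Realize C φ (fun o => (r o).1 z)} ∈ U := by
      have he : ∀ z, (fun o => (r o).1 z) = sval (fun _ => z) (fun p => p.2) := by
        intro z
        funext o
        cases o with
        | inl u => rfl
        | inr p => rfl
      have hseteq : {z | LPosForm.Realize C φ (fun o => (r o).1 z)}
          = {y | LPosForm.Realize C φ (sval (fun _ => y) (fun p => p.2))} := by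
        ext z
        simp only [Set.mem_setOf_eq]
        rw [he z]
      rw [hseteq]
      exact hpos
    have hreal : φ.Realize (UP C hCloc U)
        (fun o => Quotient.mk (bsetoid C U _) (r o)) :=
      los_lpos C hCloc U φ _ r (fun o => rfl) hset
    have hrealC := hom_lpos g φ _ hreal
    have he2 : (fun o => g.toFun _ (Quotient.mk (bsetoid C U _) (r o)))
        = sval (fun _ => x) (fun p => p.2) := by
      funext o
      cases o with
      | inl u => rfl
      | inr p => exact hgf _ p.2
    rw [he2] at hrealC
    exact hxO hrealC
  | univ => exact Filter.univ_mem
  | inter O₁ O₂ h₁ h₂ ih₁ ih₂ =>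
    exact Filter.inter_mem (ih₁ hxO.1) (ih₂ hxO.2)
  | sUnion S hS ih =>
    obtain ⟨t, htS, hxt⟩ := hxO
    exact Filter.mem_of_superset (ih t htS hxt) (Set.subset_sUnion_of_mem htS)
end
end
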